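/- arXiv:2602.03500 — 2 statements merged into one kernel-verified Lean document; each statement's English description precedes it below -/
import Mathlib

section
/- Let n ≥ 1 and let f be a well defined n-th tropical meromorphic function. Then for every α > 1, every c ≠ 0, and every r > max{2|c|, ((3−α)/(α−1))|c|}, and for δ = ±1, one has |f(δr + c) − f(δr)| ≤ (32|c| / ((α−1)(r+|c|))) ( T(α(r+|c|), f) + |f(0)|/2 ). -/
open Filter MeasureTheory Asymptotics Polynomial
open scoped Classical

noncomputable section

namespace Trop

/-- sign from the right: `sgn(x⁺)` (equal to `sgn x` for `x ≠ 0`, and `+1` at `0`). -/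
def sgnR (x : ℝ) : ℝ := if x < 0 then -1 else 1

/-- sign from the left: `sgn(x⁻)` (equal to `sgn x` for `x ≠ 0`, and `-1` at `0`). -/
def sgnL (x : ℝ) : ℝ := if 0 < x then 1 else -1

/-- `p` is the polynomial piece of `f` immediately to the right of `x`. -/
def IsRightPiece (f : ℝ → ℝ) (x : ℝ) (p : Polynomial ℝ) : Prop :=
  ∃ ε > (0 : ℝ), ∀ y ∈ Set.Ico x (x + ε), f y = p.eval y

/-- `p` is the polynomial piece of `f` immediately to the left of `x`. -/
def IsLeftPiece (f : ℝ → ℝ) (x : ℝ) (p : Polynomial ℝ) : Prop :=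
  ∃ ε > (0 : ℝ), ∀ y ∈ Set.Ioc (x - ε) x, f y = p.eval y

/-- The right polynomial piece of `f` at `x` (junk value `0` if none exists). -/
def rightPoly (f : ℝ → ℝ) (x : ℝ) : Polynomial ℝ :=
  if h : ∃ p, IsRightPiece f x p then h.choose else 0

/-- The left polynomial piece of `f` at `x` (junk value `0` if none exists). -/
def leftPoly (f : ℝ → ℝ) (x : ℝ) : Polynomial ℝ :=
  if h : ∃ p, IsLeftPiece f x p then h.choose else 0

/-- The one-sided `j`-th derivative `f^{(j)}(x⁺)` from the right. -/
def rderiv (f : ℝ → ℝ) (j : ℕ) (x : ℝ) : ℝ :=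
  ((fun q : Polynomial ℝ => Polynomial.derivative q)^[j] (rightPoly f x)).eval x

/-- The one-sided `j`-th derivative `f^{(j)}(x⁻)` from the left. -/
def lderiv (f : ℝ → ℝ) (j : ℕ) (x : ℝ) : ℝ :=
  ((fun q : Polynomial ℝ => Polynomial.derivative q)^[j] (leftPoly f x)).eval x

/-- `ω_f^{(j)}(x) = (sgn^{j+1}(x⁺) f^{(j)}(x⁺) − sgn^{j+1}(x⁻) f^{(j)}(x⁻))/j!`. -/
def omega (f : ℝ → ℝ) (j : ℕ) (x : ℝ) : ℝ :=
  (sgnR x ^ (j + 1) * rderiv f j x - sgnL x ^ (j + 1) * lderiv f j x) / (Nat.factorial j : ℝ)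

/-- `τ_f^{(j)}(x) = (f^{(j)}(x⁺) − f^{(j)}(x⁻))/j!`. -/
def tau (f : ℝ → ℝ) (j : ℕ) (x : ℝ) : ℝ :=
  (rderiv f j x - lderiv f j x) / (Nat.factorial j : ℝ)

/-- A continuous piecewise polynomial function: there is a strictly increasing doubly infinite
sequence of breakpoints with no finite accumulation point, on each segment `f` agrees with a
polynomial of degree at most `n`, and the supremum of the degrees of the pieces equals `n`. -/
def IsNthPiecewisePoly (n : ℕ) (f : ℝ → ℝ) : Prop :=
  Continuous f ∧
  ∃ (x : ℤ → ℝ) (p : ℤ → Polynomial ℝ),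
    StrictMono x ∧
    Tendsto x atTop atTop ∧ Tendsto x atBot atBot ∧
    (∀ i : ℤ, ∀ y ∈ Set.Icc (x (i - 1)) (x i), f y = (p i).eval y) ∧
    (∀ i : ℤ, (p i).natDegree ≤ n) ∧
    (∃ i : ℤ, (p i).natDegree = n)

/-- `f` has no `j`-th poles for any `j ≥ 1`. -/
def NoPoles (f : ℝ → ℝ) : Prop := ∀ j : ℕ, 1 ≤ j → ∀ x : ℝ, 0 ≤ omega f j x

/-- `f` has no `j`-th roots for any `j ≥ 1`. -/
def NoRoots (f : ℝ → ℝ) : Prop := ∀ j : ℕ, 1 ≤ j → ∀ x : ℝ, omega f j x ≤ 0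

/-- An `n`-th tropical meromorphic function. -/
def IsTropicalMeromorphic (n : ℕ) (f : ℝ → ℝ) : Prop :=
  IsNthPiecewisePoly n f ∧ ¬ ∃ c : ℝ, ∀ x : ℝ, f x = c

/-- An `n`-th tropical entire function (no poles; constants allowed when `n = 0`). -/
def IsTropicalEntire (n : ℕ) (f : ℝ → ℝ) : Prop :=
  IsNthPiecewisePoly n f ∧ NoPoles f

/-- The `n`-th max-plus proximity function `m(r, f)`. -/
def mProx (r : ℝ) (f : ℝ → ℝ) : ℝ := (max (f r) 0 + max (f (-r)) 0) / 2

/-- The `j`-th integrated max-plus counting function of poles,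
`N^{(j)}(r, f) = (1/2) Σ_z |ω_f^{(j)}(z)| (r − |z|)^j` over the `j`-th poles `z` in `(−r, r)`. -/
def Npole (j : ℕ) (r : ℝ) (f : ℝ → ℝ) : ℝ :=
  (1 / 2) * ∑' z : {z : ℝ // z ∈ Set.Ioo (-r) r ∧ omega f j z < 0},
    |omega f j z.1| * (r - |z.1|) ^ j

/-- The `j`-th integrated counting function of roots, `N^{(j)}(r, 1₀ ⊘ f)`. -/
def Nroot (j : ℕ) (r : ℝ) (f : ℝ → ℝ) : ℝ :=
  (1 / 2) * ∑' z : {z : ℝ // z ∈ Set.Ioo (-r) r ∧ 0 < omega f j z},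
    |omega f j z.1| * (r - |z.1|) ^ j

/-- Partial pole-counting function restricted to a set `I`. -/
def NpoleIn (j : ℕ) (r : ℝ) (I : Set ℝ) (f : ℝ → ℝ) : ℝ :=
  (1 / 2) * ∑' z : {z : ℝ // z ∈ I ∧ omega f j z < 0},
    |omega f j z.1| * (r - |z.1|) ^ j

/-- Partial root-counting function restricted to a set `I`. -/
def NrootIn (j : ℕ) (r : ℝ) (I : Set ℝ) (f : ℝ → ℝ) : ℝ :=
  (1 / 2) * ∑' z : {z : ℝ // z ∈ I ∧ 0 < omega f j z},
    |omega f j z.1| * (r - |z.1|) ^ j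

/-- The `n`-th max-plus characteristic function `T(r, f)`. -/
def Tchar (n : ℕ) (r : ℝ) (f : ℝ → ℝ) : ℝ :=
  mProx r f + ∑ j ∈ Finset.Icc 1 n, Npole j r f

/-- The hyper-order `ρ₂(f) = limsup_{r→∞} log log T(r,f) / log r`. -/
def hyperOrder (n : ℕ) (f : ℝ → ℝ) : ℝ :=
  Filter.limsup (fun r : ℝ => Real.log (Real.log (Tchar n r f)) / Real.log r) Filter.atTop

/-- `E ⊆ (1, ∞)` has finite logarithmic measure: `∫_E dt/t < ∞`. -/
def FiniteLogMeasure (E : Set ℝ) : Prop :=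
  E ⊆ Set.Ioi 1 ∧ (∫⁻ t in E, ENNReal.ofReal (1 / t)) < ⊤

/-- A well defined polynomial: apart from the constant term, only the coefficients whose index
has the same parity as the degree survive, and they all have the same sign. -/
def WellDefinedPoly (p : Polynomial ℝ) : Prop :=
  (∀ k : ℕ, 1 ≤ k → k % 2 ≠ p.natDegree % 2 → p.coeff k = 0) ∧
  ((∀ k : ℕ, 1 ≤ k → 0 ≤ p.coeff k) ∨ (∀ k : ℕ, 1 ≤ k → p.coeff k ≤ 0))

/-- A piecewise polynomial function is well defined if all its polynomial pieces are. -/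
def WellDefinedFn (f : ℝ → ℝ) : Prop :=
  ∀ x : ℝ, WellDefinedPoly (rightPoly f x) ∧ WellDefinedPoly (leftPoly f x)

/-- The pointwise maximum of the components of a representation of a tropical holomorphic curve. -/
def Fmax {m : ℕ} (f : Fin (m + 1) → ℝ → ℝ) (x : ℝ) : ℝ := ⨆ i, f i x

/-- The tropical Cartan characteristic function of the curve represented by `f`. -/
def TCartan {m : ℕ} (f : Fin (m + 1) → ℝ → ℝ) (r : ℝ) : ℝ :=
  (Fmax f r + Fmax f (-r)) / 2 - Fmax f 0

/-- `f` is a representation of an `n`-th tropical holomorphic curve `ℝ → TP^m`: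
each component is an `n_i`-th tropical entire function and `max_i n_i = n`. -/
def IsHoloCurveRep (n : ℕ) {m : ℕ} (f : Fin (m + 1) → ℝ → ℝ) : Prop :=
  ∃ d : Fin (m + 1) → ℕ, (∀ i, IsTropicalEntire (d i) (f i)) ∧ Finset.univ.sup d = n

/-- A reduced representation: the components have no common `j`-th roots. -/
def ReducedRep {m : ℕ} (f : Fin (m + 1) → ℝ → ℝ) : Prop :=
  ¬ ∃ (j : ℕ) (x : ℝ), 1 ≤ j ∧ ∀ i, 0 < omega (f i) j x

/-- Two representations define the same curve in `TP^m`: pointwise they differ by a scalar. -/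
def SameCurve {m : ℕ} (f g : Fin (m + 1) → ℝ → ℝ) : Prop :=
  ∀ x : ℝ, ∃ lam : ℝ, ∀ i, f i x = g i x + lam

/-- The curve represented by `f` is non-constant. -/
def NonConstantCurve {m : ℕ} (f : Fin (m + 1) → ℝ → ℝ) : Prop :=
  ¬ ∀ x y : ℝ, ∃ lam : ℝ, ∀ i, f i x = f i y + lam

/-- The tropical Casoratian `C₀(f₀, …, f_m)(x) = max_σ Σ_i f_i(x + σ(i))`. -/
def Casoratian {m : ℕ} (f : Fin (m + 1) → ℝ → ℝ) (x : ℝ) : ℝ :=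
  ⨆ σ : Equiv.Perm (Fin (m + 1)), ∑ i, f i (x + ((σ i : ℕ) : ℝ))

end Trop

end



set_option linter.unusedSectionVars false
noncomputable section TropAux
open Trop Polynomial Filter

namespace TropAux

/-! ### Basic lemmas on pieces -/

lemma isRightPiece_unique {f : ℝ → ℝ} {x : ℝ} {p q : Polynomial ℝ}
    (hp : IsRightPiece f x p) (hq : IsRightPiece f x q) : p = q := by
  obtain ⟨ε, hε, h⟩ := hp
  obtain ⟨ε', hε', h'⟩ := hq
  apply Polynomial.eq_of_infinite_eval_eq
  apply Set.Infinite.mono (s := Set.Ico x (x + min ε ε'))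
  · intro y hy
    have h1 : y ∈ Set.Ico x (x + ε) := ⟨hy.1, lt_of_lt_of_le hy.2 (by simp [min_le_left])⟩
    have h2 : y ∈ Set.Ico x (x + ε') := ⟨hy.1, lt_of_lt_of_le hy.2 (by simp [min_le_right])⟩
    have := h y h1
    have := h' y h2
    simp only [Set.mem_setOf_eq]
    linarith
  · exact Set.Ico_infinite (by simp [lt_min hε hε'])

lemma isLeftPiece_unique {f : ℝ → ℝ} {x : ℝ} {p q : Polynomial ℝ}
    (hp : IsLeftPiece f x p) (hq : IsLeftPiece f x q) : p = q := by
  obtain ⟨ε, hε, h⟩ := hp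
  obtain ⟨ε', hε', h'⟩ := hq
  apply Polynomial.eq_of_infinite_eval_eq
  apply Set.Infinite.mono (s := Set.Ioc (x - min ε ε') x)
  · intro y hy
    have h1 : y ∈ Set.Ioc (x - ε) x :=
      ⟨lt_of_le_of_lt (sub_le_sub_left (min_le_left ε ε') x) hy.1, hy.2⟩
    have h2 : y ∈ Set.Ioc (x - ε') x :=
      ⟨lt_of_le_of_lt (sub_le_sub_left (min_le_right ε ε') x) hy.1, hy.2⟩
    have := h y h1
    have := h' y h2
    simp only [Set.mem_setOf_eq]
    linarith
  · exact Set.Ioc_infinite (by simp [lt_min hε hε'])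

lemma rightPoly_eq {f : ℝ → ℝ} {x : ℝ} {p : Polynomial ℝ}
    (hp : IsRightPiece f x p) : rightPoly f x = p := by
  have hex : ∃ q, IsRightPiece f x q := ⟨p, hp⟩
  rw [rightPoly, dif_pos hex]
  exact isRightPiece_unique hex.choose_spec hp

lemma leftPoly_eq {f : ℝ → ℝ} {x : ℝ} {p : Polynomial ℝ}
    (hp : IsLeftPiece f x p) : leftPoly f x = p := by
  have hex : ∃ q, IsLeftPiece f x q := ⟨p, hp⟩
  rw [leftPoly, dif_pos hex]
  exact isLeftPiece_unique hex.choose_spec hp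

/-! ### Locating pieces for a piecewise polynomial -/

variable {n : ℕ} {f : ℝ → ℝ} {x : ℤ → ℝ} {p : ℤ → Polynomial ℝ}

section PW

variable (hm : StrictMono x) (ht : Tendsto x atTop atTop) (hb : Tendsto x atBot atBot)
  (hpc : ∀ i : ℤ, ∀ y ∈ Set.Icc (x (i - 1)) (x i), f y = (p i).eval y)

include hm ht hb in
lemma exists_index (t : ℝ) : ∃ i : ℤ, x (i - 1) ≤ t ∧ t < x i := by
  have hinh : ∃ i : ℤ, t < x i := (ht.eventually_gt_atTop t).exists
  have hbd : ∃ b : ℤ, ∀ i : ℤ, t < x i → b ≤ i := by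
    obtain ⟨m, hmle⟩ := (hb.eventually_le_atBot t).exists_forall_of_atBot
    exact ⟨m + 1, fun i hi => by
      by_contra hc
      exact absurd (hmle i (by omega)) (not_le.2 hi)⟩
  obtain ⟨i, hi, hleast⟩ := Int.exists_least_of_bdd hbd hinh
  refine ⟨i, ?_, hi⟩
  by_contra hc
  have := hleast (i - 1) (not_le.1 hc)
  omega

include hpc in
lemma rightPiece_of {i : ℤ} {t : ℝ} (h1 : x (i - 1) ≤ t) (h2 : t < x i) :
    IsRightPiece f t (p i) := by
  refine ⟨x i - t, by linarith, fun y hy => hpc i y ⟨le_trans h1 hy.1, ?_⟩⟩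
  have := hy.2
  linarith

include hpc in
lemma leftPiece_of {i : ℤ} {t : ℝ} (h1 : x (i - 1) < t) (h2 : t ≤ x i) :
    IsLeftPiece f t (p i) := by
  refine ⟨t - x (i - 1), by linarith, fun y hy => hpc i y ⟨?_, le_trans hy.2 h2⟩⟩
  have := hy.1
  linarith

include hm ht hb hpc in
lemma exists_rightPiece (t : ℝ) : ∃ q, IsRightPiece f t q := by
  obtain ⟨i, h1, h2⟩ := exists_index hm ht hb t
  exact ⟨p i, rightPiece_of hpc h1 h2⟩

include hm ht hb hpc in
lemma exists_leftPiece (t : ℝ) : ∃ q, IsLeftPiece f t q := by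
  obtain ⟨i, h1, h2⟩ := exists_index hm ht hb t
  rcases eq_or_lt_of_le h1 with he | hl
  · refine ⟨p (i - 1), leftPiece_of hpc ?_ ?_⟩
    · rw [← he]; exact hm (by omega)
    · rw [← he]
  · exact ⟨p i, leftPiece_of hpc hl h2.le⟩

include hm ht hb hpc in
lemma omega_eq_zero_off {t : ℝ} (hne : t ≠ 0) (hnr : ∀ i : ℤ, x i ≠ t) (j : ℕ) :
    omega f j t = 0 := by
  obtain ⟨i, h1, h2⟩ := exists_index hm ht hb t
  have h1' : x (i - 1) < t := lt_of_le_of_ne h1 (hnr _)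
  have hr : rightPoly f t = p i := rightPoly_eq (rightPiece_of hpc h1 h2)
  have hl : leftPoly f t = p i := leftPoly_eq (leftPiece_of hpc h1' h2.le)
  have hs : sgnR t = sgnL t := by
    rcases lt_trichotomy t 0 with h | h | h
    · simp [sgnR, sgnL, h, not_lt.2 h.le]
    · exact absurd h hne
    · simp [sgnR, sgnL, h, not_lt.2 h.le]
  rw [omega, rderiv, lderiv, hr, hl, hs, sub_self, zero_div]

include hm hpc in
lemma rightPoly_breakpoint (i : ℤ) : rightPoly f (x i) = p (i + 1) := by
  apply rightPoly_eq
  apply rightPiece_of hpc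
  · rw [show (i:ℤ) + 1 - 1 = i from by omega]
  · exact hm (by omega)

include hm hpc in
lemma leftPoly_breakpoint (i : ℤ) : leftPoly f (x i) = p i := by
  exact leftPoly_eq (leftPiece_of hpc (hm (by omega)) le_rfl)

variable (hdeg : ∀ i : ℤ, (p i).natDegree ≤ n)

include hm hpc hdeg in
lemma jump_eval (i : ℤ) (t : ℝ) :
    (p (i+1)).eval t = (p i).eval t +
      ∑ j ∈ Finset.Icc 1 n, tau f j (x i) * (t - x i) ^ j := by
  set q : Polynomial ℝ := p (i+1) - p i with hqdef
  have hr : rightPoly f (x i) = p (i + 1) := rightPoly_breakpoint hm hpc i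
  have hl : leftPoly f (x i) = p i := leftPoly_breakpoint hm hpc i
  have hq0 : q.eval (x i) = 0 := by
    have e1 : f (x i) = (p (i+1)).eval (x i) := by
      apply hpc (i+1) (x i)
      constructor
      · rw [show (i:ℤ) + 1 - 1 = i from by omega]
      · exact (hm (by omega : i < i + 1)).le
    have e2 : f (x i) = (p i).eval (x i) :=
      hpc i (x i) ⟨(hm (by omega : i - 1 < i)).le, le_rfl⟩
    simp only [hqdef, eval_sub]
    linarith
  have hqdeg : q.natDegree ≤ n :=
    le_trans (Polynomial.natDegree_sub_le _ _) (by simp [hdeg])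
  have htau : ∀ j : ℕ, tau f j (x i) = ((hasseDeriv j) q).eval (x i) := by
    intro j
    have hfac0 : (j.factorial : ℝ) ≠ 0 := by exact_mod_cast j.factorial_ne_zero
    rw [tau, rderiv, lderiv, hr, hl]
    have hq : (fun q : Polynomial ℝ => derivative q)^[j] (p (i+1)) -
        (fun q : Polynomial ℝ => derivative q)^[j] (p i)
        = (fun q : Polynomial ℝ => derivative q)^[j] q := by
      show (⇑derivative)^[j] (p (i+1)) - (⇑derivative)^[j] (p i) = (⇑derivative)^[j] q
      simp [hqdef, Polynomial.iterate_derivative_sub]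
    have h2 : (fun q : Polynomial ℝ => derivative q)^[j] q
        = j.factorial • (hasseDeriv j) q := by
      show (⇑derivative)^[j] q = j.factorial • (hasseDeriv j) q
      rw [← Polynomial.factorial_smul_hasseDeriv]
      rfl
    rw [← eval_sub, hq, h2, Polynomial.eval_smul, nsmul_eq_mul]
    field_simp
  have hsub : ((taylor (x i)) q).support ⊆ Finset.Icc 1 n := by
    intro j hj
    have hj0 : j ≠ 0 := by
      intro h
      rw [h] at hj
      have := Polynomial.mem_support_iff.1 hj
      rw [Polynomial.taylor_coeff_zero] at this
      exact this hq0
    have hjn : j ≤ n := by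
      have := Polynomial.le_natDegree_of_mem_supp j hj
      rw [Polynomial.natDegree_taylor] at this
      omega
    simp only [Finset.mem_Icc]
    omega
  have key : q.eval t = ∑ j ∈ Finset.Icc 1 n,
      ((hasseDeriv j) q).eval (x i) * (t - x i) ^ j := by
    conv_lhs => rw [← Polynomial.sum_taylor_eq q (x i)]
    rw [Polynomial.sum_def, Polynomial.eval_finset_sum]
    simp only [eval_mul, eval_pow, eval_C, eval_sub, eval_X]
    rw [Finset.sum_subset hsub]
    · exact Finset.sum_congr rfl fun j _ => by rw [Polynomial.taylor_coeff]
    · intro j _ hj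
      rw [Polynomial.notMem_support_iff.1 hj]
      simp
  have hq' : q.eval t = (p (i+1)).eval t - (p i).eval t := by simp [hqdef]
  rw [hq'] at key
  have hsum : ∑ j ∈ Finset.Icc 1 n, tau f j (x i) * (t - x i) ^ j
      = ∑ j ∈ Finset.Icc 1 n, ((hasseDeriv j) q).eval (x i) * (t - x i) ^ j :=
    Finset.sum_congr rfl fun j _ => by rw [htau j]
  rw [hsum]
  linarith

include hm hpc hdeg in
lemma tele_eval (i₀ : ℤ) (k : ℕ) (t : ℝ) :
    (p (i₀ + k)).eval t = (p i₀).eval t +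
      ∑ l ∈ Finset.range k, ∑ j ∈ Finset.Icc 1 n,
        tau f j (x (i₀ + l)) * (t - x (i₀ + l)) ^ j := by
  induction k with
  | zero => simp
  | succ k ih =>
    have hidx : (i₀ + ((k:ℕ)+1:ℕ) : ℤ) = (i₀ + k) + 1 := by push_cast; ring
    rw [hidx, jump_eval hm hpc hdeg (i₀ + k) t, ih, Finset.sum_range_succ]
    ring

include hm hpc hdeg in
lemma rep_eval (i₀ : ℤ) (k : ℕ) (t : ℝ) (h1 : x (i₀ - 1) ≤ t) (h2 : t ≤ x (i₀ + k)) :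
    f t = (p i₀).eval t +
      ∑ l ∈ Finset.range k, ∑ j ∈ Finset.Icc 1 n,
        tau f j (x (i₀ + l)) * (max (t - x (i₀ + l)) 0) ^ j := by
  induction k with
  | zero => simpa using hpc i₀ t ⟨h1, by simpa using h2⟩
  | succ k ih =>
    by_cases hc : t ≤ x (i₀ + k)
    · rw [Finset.sum_range_succ, ih hc]
      have hz : ∑ j ∈ Finset.Icc 1 n,
          tau f j (x (i₀ + k)) * (max (t - x (i₀ + k)) 0) ^ j = 0 := by
        apply Finset.sum_eq_zero
        intro j hj
        have hmx : max (t - x (i₀ + k)) 0 = 0 := max_eq_right (by linarith)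
        rw [hmx, zero_pow (by have := (Finset.mem_Icc.1 hj).1; omega), mul_zero]
      rw [hz, add_zero]
    · push_neg at hc
      have hidx : (i₀ + ((k:ℕ)+1:ℕ) : ℤ) = (i₀ + k) + 1 := by push_cast; ring
      have hft : f t = (p ((i₀ + k) + 1)).eval t := by
        apply hpc ((i₀ + k) + 1) t
        constructor
        · rw [show (i₀ + (k:ℤ)) + 1 - 1 = i₀ + k from by ring]
          exact hc.le
        · rw [← hidx]
          exact h2
      rw [hft, ← hidx, tele_eval hm hpc hdeg i₀ (k+1) t]
      congr 1
      apply Finset.sum_congr rfl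
      intro l hl
      apply Finset.sum_congr rfl
      intro j hj
      have hlk : x (i₀ + l) ≤ x (i₀ + k) := by
        apply hm.monotone
        have := Finset.mem_range.1 hl
        omega
      have : max (t - x (i₀ + l)) 0 = t - x (i₀ + l) :=
        max_eq_left (by have := hc.le; linarith)
      rw [this]


end PW

/-! ### Elementary power inequalities -/

lemma geom_bound {a b : ℝ} (hb : 0 ≤ b) (hab : b ≤ a) (j : ℕ) :
    a ^ j - b ^ j ≤ j * a ^ (j - 1) * (a - b) := by
  have ha : 0 ≤ a := le_trans hb hab
  rw [← geom_sum₂_mul a b j]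
  have hs : (∑ i ∈ Finset.range j, a ^ i * b ^ (j - 1 - i)) ≤ j * a ^ (j - 1) := by
    calc (∑ i ∈ Finset.range j, a ^ i * b ^ (j - 1 - i))
        ≤ ∑ _i ∈ Finset.range j, a ^ (j - 1) := by
          apply Finset.sum_le_sum
          intro i hi
          have hi' : i < j := Finset.mem_range.1 hi
          calc a ^ i * b ^ (j - 1 - i) ≤ a ^ i * a ^ (j - 1 - i) :=
                mul_le_mul_of_nonneg_left (pow_le_pow_left₀ hb hab _) (pow_nonneg ha _)
            _ = a ^ (j - 1) := by rw [← pow_add]; congr 1; omega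
      _ = j * a ^ (j - 1) := by simp [mul_comm]
  exact mul_le_mul_of_nonneg_right hs (by linarith)

lemma binom_bound {x y : ℝ} (hx : 0 ≤ x) (hy : 0 ≤ y) {j : ℕ} (hj : 1 ≤ j) :
    (j : ℝ) * x ^ (j - 1) * y ≤ (x + y) ^ j := by
  rw [add_pow]
  have hmem : j - 1 ∈ Finset.range (j + 1) := by
    simp only [Finset.mem_range]; omega
  have hle := Finset.single_le_sum (f := fun m => x ^ m * y ^ (j - m) * (j.choose m : ℝ))
    (fun i _ => by positivity) hmem
  have h1 : j - (j - 1) = 1 := by omega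
  have h2 : (j.choose (j - 1) : ℝ) = j := by
    rw [← Nat.choose_symm (by omega : j - 1 ≤ j), h1, Nat.choose_one_right]
  have e : x ^ (j - 1) * y ^ (j - (j - 1)) * (j.choose (j - 1) : ℝ) = (j : ℝ) * x ^ (j - 1) * y := by
    rw [h1, pow_one, h2]
    ring
  rw [← e]
  exact hle

lemma pow_diff_bound {u v w RR D : ℝ} (hu : 0 ≤ u) (huv : u ≤ v) (hv : v ≤ RR)
    (hw : 0 ≤ w) (hwS : w ≤ RR + D) (hD : 0 < D) {j : ℕ} (hj : 1 ≤ j) :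
    max (v - w) 0 ^ j - max (u - w) 0 ^ j ≤ (v - u) * (RR + D - w) ^ j / D := by
  rw [le_div_iff₀ hD]
  rcases le_or_gt v w with hvw | hvw
  · have e1 : max (v - w) 0 = 0 := max_eq_right (by linarith)
    have e2 : max (u - w) 0 = 0 := max_eq_right (by linarith)
    have h0 : (0:ℝ) ≤ (RR + D - w) ^ j := pow_nonneg (by linarith) _
    have hz : (0:ℝ) ^ j = 0 := zero_pow (by omega)
    rw [e1, e2, hz, sub_self, zero_mul]
    exact mul_nonneg (by linarith) h0
  · have hwR : w ≤ RR := le_trans hvw.le hv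
    set a := max (v - w) 0 with hadef
    set b := max (u - w) 0 with hbdef
    have ha : a = v - w := max_eq_left (by linarith)
    have hb0 : 0 ≤ b := le_max_right _ _
    have hba : b ≤ a := max_le_max (by linarith) le_rfl
    have hab : a - b ≤ v - u := by
      have : u - w ≤ b := le_max_left _ _
      rw [ha]; linarith
    have haR : a ≤ RR - w := by rw [ha]; linarith
    have h1 : a ^ j - b ^ j ≤ j * a ^ (j - 1) * (a - b) := geom_bound hb0 hba j
    have h2 : (j:ℝ) * a ^ (j - 1) * (a - b) ≤ (j:ℝ) * (RR - w) ^ (j - 1) * (v - u) := by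
      have ha0 : 0 ≤ a := le_trans hb0 hba
      have : a ^ (j-1) ≤ (RR - w) ^ (j - 1) := pow_le_pow_left₀ ha0 haR _
      have hab0 : 0 ≤ a - b := by linarith
      apply mul_le_mul
      · apply mul_le_mul_of_nonneg_left this (by positivity)
      · exact hab
      · exact hab0
      · have := pow_nonneg (by linarith : (0:ℝ) ≤ RR - w) (j - 1)
        positivity
    have h3 : (j:ℝ) * (RR - w) ^ (j - 1) * D ≤ (RR - w + D) ^ j :=
      binom_bound (by linarith) hD.le hj
    calc (a ^ j - b ^ j) * D ≤ ((j:ℝ) * (RR - w) ^ (j - 1) * (v - u)) * D := by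
          nlinarith [le_trans h1 h2]
      _ = (v - u) * ((j:ℝ) * (RR - w) ^ (j - 1) * D) := by ring
      _ ≤ (v - u) * (RR - w + D) ^ j :=
          mul_le_mul_of_nonneg_left h3 (by linarith)
      _ = (v - u) * (RR + D - w) ^ j := by ring_nf

end TropAux

namespace TropAux

/-! ### Packaged representation and counting bounds -/

lemma rightPoly_natDegree_le {n : ℕ} {f : ℝ → ℝ} (hpp : IsNthPiecewisePoly n f) (z : ℝ) :
    (rightPoly f z).natDegree ≤ n := by
  obtain ⟨-, x, p, hm, ht, hb, hpc, hdeg, -⟩ := hpp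
  obtain ⟨i, h1, h2⟩ := exists_index hm ht hb z
  rw [rightPoly_eq (rightPiece_of hpc h1 h2)]
  exact hdeg i

lemma rightPoly_eval_self {n : ℕ} {f : ℝ → ℝ} (hpp : IsNthPiecewisePoly n f) (z : ℝ) :
    (rightPoly f z).eval z = f z := by
  obtain ⟨-, x, p, hm, ht, hb, hpc, hdeg, -⟩ := hpp
  obtain ⟨i, h1, h2⟩ := exists_index hm ht hb z
  rw [rightPoly_eq (rightPiece_of hpc h1 h2)]
  exact (hpc i z ⟨h1, h2.le⟩).symm

theorem repr_pos {n : ℕ} {f : ℝ → ℝ} (hpp : IsNthPiecewisePoly n f)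
    {S' : ℝ} (hS' : 0 < S') :
    ∃ Z : Finset ℝ, (∀ w ∈ Z, 0 < w ∧ w ≤ S') ∧
      ∀ t, 0 ≤ t → t ≤ S' →
        f t = (rightPoly f 0).eval t +
          ∑ w ∈ Z, ∑ j ∈ Finset.Icc 1 n, tau f j w * (max (t - w) 0) ^ j := by
  obtain ⟨-, x, p, hm, ht, hb, hpc, hdeg, -⟩ := hpp
  have hinh : ∃ i : ℤ, 0 < x i := (ht.eventually_gt_atTop 0).exists
  have hbd : ∃ b : ℤ, ∀ i : ℤ, 0 < x i → b ≤ i := by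
    obtain ⟨m, hmle⟩ := (hb.eventually_le_atBot 0).exists_forall_of_atBot
    exact ⟨m + 1, fun i hi => by
      by_contra hcon
      exact absurd (hmle i (by omega)) (not_le.2 hi)⟩
  obtain ⟨i₀, hi₀, hleast⟩ := Int.exists_least_of_bdd hbd hinh
  have hx0 : x (i₀ - 1) ≤ 0 := by
    by_contra hcon
    have := hleast (i₀ - 1) (not_le.1 hcon)
    omega
  have hP : rightPoly f 0 = p i₀ := rightPoly_eq (rightPiece_of hpc hx0 hi₀)
  obtain ⟨i₁, hi₁⟩ : ∃ i, S' < x i := (ht.eventually_gt_atTop S').exists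
  set K := (i₁ - i₀).toNat with hK
  have hxK : S' ≤ x (i₀ + K) := le_trans hi₁.le (hm.monotone (by rw [hK]; omega))
  set L := (Finset.range K).filter (fun l : ℕ => x (i₀ + (l:ℤ)) ≤ S') with hLdef
  refine ⟨L.image (fun l : ℕ => x (i₀ + (l:ℤ))), ?_, ?_⟩
  · intro w hw
    obtain ⟨l, hl, rfl⟩ := Finset.mem_image.1 hw
    have hl' := Finset.mem_filter.1 hl
    exact ⟨lt_of_lt_of_le hi₀ (hm.monotone (le_add_of_nonneg_right (by exact_mod_cast Nat.zero_le l))), hl'.2⟩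
  · intro t ht0 htS
    rw [Finset.sum_image (by
      intro a _ b _ hab
      have := hm.injective hab
      omega), hP]
    rw [rep_eval hm hpc hdeg i₀ K t (le_trans hx0 ht0) (le_trans htS hxK)]
    congr 1
    rw [← Finset.sum_filter_add_sum_filter_not (Finset.range K) (fun l : ℕ => x (i₀ + (l:ℤ)) ≤ S')]
    have hz : ∑ l ∈ (Finset.range K).filter (fun l : ℕ => ¬ x (i₀ + (l:ℤ)) ≤ S'),
        (∑ j ∈ Finset.Icc 1 n, tau f j (x (i₀ + l)) * (max (t - x (i₀ + l)) 0) ^ j) = 0 := by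
      apply Finset.sum_eq_zero
      intro l hl
      have hl' := (Finset.mem_filter.1 hl).2
      push_neg at hl'
      apply Finset.sum_eq_zero
      intro j hj
      have hmx : max (t - x (i₀ + l)) 0 = 0 := max_eq_right (by linarith)
      rw [hmx, zero_pow (by have := (Finset.mem_Icc.1 hj).1; omega), mul_zero]
    rw [hz, add_zero]

lemma pole_finite {n : ℕ} {f : ℝ → ℝ} (hpp : IsNthPiecewisePoly n f) (j : ℕ) (S' : ℝ) :
    {z : ℝ | z ∈ Set.Ioo (-S') S' ∧ omega f j z < 0}.Finite := by
  obtain ⟨-, x, p, hm, ht, hb, hpc, hdeg, -⟩ := hpp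
  obtain ⟨N, hN⟩ := (ht.eventually_gt_atTop S').exists_forall_of_atTop
  obtain ⟨M, hM⟩ := (hb.eventually_lt_atBot (-S')).exists_forall_of_atBot
  apply Set.Finite.subset (Set.Finite.union (Set.finite_singleton 0)
    ((Set.finite_Ioo M N).image x))
  intro z hz
  by_cases h0 : z = 0
  · exact Or.inl (by simp [h0])
  · right
    have hex : ∃ i, x i = z := by
      by_contra hno
      push_neg at hno
      have heq := omega_eq_zero_off hm ht hb hpc h0 hno j
      have h2 : omega f j z < 0 := hz.2
      rw [heq] at h2
      exact lt_irrefl 0 h2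
    obtain ⟨i, hi⟩ := hex
    refine ⟨i, ?_, hi⟩
    simp only [Set.mem_Ioo]
    constructor
    · by_contra hcon
      have := hM i (not_lt.1 hcon)
      rw [hi] at this
      exact absurd hz.1.1 (not_lt.2 this.le)
    · by_contra hcon
      have := hN i (not_lt.1 hcon)
      rw [hi] at this
      exact absurd hz.1.2 (not_lt.2 this.le)

lemma pole_term_nonneg {f : ℝ → ℝ} {j : ℕ} {S' : ℝ}
    (z : {z : ℝ // z ∈ Set.Ioo (-S') S' ∧ omega f j z < 0}) :
    0 ≤ |omega f j z.1| * (S' - |z.1|) ^ j := by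
  have h1 : |z.1| < S' := abs_lt.2 ⟨z.2.1.1, z.2.1.2⟩
  have h2 : (0:ℝ) ≤ S' - |z.1| := by linarith
  positivity

lemma Npole_nonneg (f : ℝ → ℝ) (j : ℕ) (r : ℝ) : 0 ≤ Npole j r f := by
  rw [Npole]
  apply mul_nonneg (by norm_num)
  exact tsum_nonneg fun z => pole_term_nonneg z

lemma mProx_nonneg (f : ℝ → ℝ) (r : ℝ) : 0 ≤ mProx r f := by
  rw [mProx]
  have := le_max_right (f r) 0
  have := le_max_right (f (-r)) 0
  linarith

lemma Tchar_nonneg (n : ℕ) (f : ℝ → ℝ) (r : ℝ) : 0 ≤ Tchar n r f := by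
  rw [Tchar]
  have h1 := mProx_nonneg f r
  have h2 : 0 ≤ ∑ j ∈ Finset.Icc 1 n, Npole j r f :=
    Finset.sum_nonneg fun j _ => Npole_nonneg f j r
  linarith

lemma summable_pole {n : ℕ} {f : ℝ → ℝ} (hpp : IsNthPiecewisePoly n f) (j : ℕ) (S' : ℝ) :
    Summable (fun z : {z : ℝ // z ∈ Set.Ioo (-S') S' ∧ omega f j z < 0} =>
      |omega f j z.1| * (S' - |z.1|) ^ j) := by
  have : Finite {z : ℝ // z ∈ Set.Ioo (-S') S' ∧ omega f j z < 0} :=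
    (pole_finite hpp j S').to_subtype
  exact Summable.of_finite

lemma finsetsum_le_Npole {n : ℕ} {f : ℝ → ℝ} (hpp : IsNthPiecewisePoly n f) {j : ℕ} {S' : ℝ}
    (s : Finset ℝ) (hs : ∀ w ∈ s, w ∈ Set.Ioo (-S') S' ∧ omega f j w < 0) :
    ∑ w ∈ s, |omega f j w| * (S' - |w|) ^ j ≤ 2 * Npole j S' f := by
  classical
  have hinj : Function.Injective (fun w : {w : ℝ // w ∈ s} =>
      (⟨w.1, hs w.1 w.2⟩ : {z : ℝ // z ∈ Set.Ioo (-S') S' ∧ omega f j z < 0})) := by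
    intro a b hab
    apply Subtype.ext
    have h := congrArg Subtype.val hab
    exact h
  have h2 := Summable.sum_le_tsum (s.attach.map ⟨_, hinj⟩)
    (fun z _ => pole_term_nonneg z) (summable_pole hpp j S')
  rw [Finset.sum_map] at h2
  simp only [Function.Embedding.coeFn_mk] at h2
  rw [← Finset.sum_attach s (fun w => |omega f j w| * (S' - |w|) ^ j), Npole]
  linarith

lemma zero_pole_le_Npole {n : ℕ} {f : ℝ → ℝ} (hpp : IsNthPiecewisePoly n f) {j : ℕ} {S' : ℝ}
    (hS' : 0 < S') (hj : omega f j 0 < 0) :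
    |omega f j 0| * S' ^ j ≤ 2 * Npole j S' f := by
  have := finsetsum_le_Npole hpp (j := j) (S' := S') ({0} : Finset ℝ)
    (fun w hw => by
      have hw0 : w = 0 := Finset.mem_singleton.1 hw
      subst hw0
      exact ⟨Set.mem_Ioo.2 ⟨by linarith, hS'⟩, hj⟩)
  simpa using this

/-! ### Reflection -/

def pref (q : Polynomial ℝ) : Polynomial ℝ := q.comp (-X)

lemma pref_eval (q : Polynomial ℝ) (t : ℝ) : (pref q).eval t = q.eval (-t) := by
  simp [pref]

lemma pref_coeff (q : Polynomial ℝ) (k : ℕ) : (pref q).coeff k = (-1)^k * q.coeff k := by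
  induction q using Polynomial.induction_on' with
  | add p r hp hr =>
    simp only [pref, add_comp, coeff_add] at *
    rw [hp, hr]; ring
  | monomial m a =>
    have hpow : ((-X : Polynomial ℝ)) ^ m = C ((-1)^m) * X ^ m := by
      rw [neg_pow, map_pow]
      simp
    rw [pref, ← C_mul_X_pow_eq_monomial, mul_comp, C_comp, X_pow_comp, hpow,
      ← mul_assoc, ← C_mul, coeff_C_mul, coeff_X_pow, coeff_C_mul, coeff_X_pow]
    split_ifs with h
    · subst h; ring
    · ring

lemma pref_natDegree (q : Polynomial ℝ) : (pref q).natDegree = q.natDegree := by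
  rw [pref, natDegree_comp, natDegree_neg, natDegree_X, mul_one]

lemma pref_derivative (q : Polynomial ℝ) :
    derivative (pref q) = - pref (derivative q) := by
  rw [pref, pref, derivative_comp, derivative_neg, derivative_X, neg_one_mul]

lemma pref_iter_derivative (q : Polynomial ℝ) (j : ℕ) (t : ℝ) :
    ((fun q : Polynomial ℝ => derivative q)^[j] (pref q)).eval t
      = (-1)^j * ((fun q : Polynomial ℝ => derivative q)^[j] q).eval (-t) := by
  induction j generalizing q with
  | zero => simp [pref_eval]
  | succ j ih =>
    have e1 : (fun q : Polynomial ℝ => derivative q)^[j+1] (pref q)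
        = (fun q : Polynomial ℝ => derivative q)^[j] (- pref (derivative q)) := by
      rw [Function.iterate_succ_apply]
      exact congrArg _ (pref_derivative q)
    have e2 : (fun q : Polynomial ℝ => derivative q)^[j] (- pref (derivative q))
        = - (fun q : Polynomial ℝ => derivative q)^[j] (pref (derivative q)) := by
      show (⇑derivative)^[j] (- pref (derivative q)) = - (⇑derivative)^[j] (pref (derivative q))
      exact Polynomial.iterate_derivative_neg
    rw [e1, e2, eval_neg, ih (derivative q), Function.iterate_succ_apply]
    rw [pow_succ]
    ring

lemma isRightPiece_reflect {f : ℝ → ℝ} {w : ℝ} {q : Polynomial ℝ}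
    (h : IsLeftPiece f w q) : IsRightPiece (fun t => f (-t)) (-w) (pref q) := by
  obtain ⟨ε, hε, hq⟩ := h
  refine ⟨ε, hε, fun y hy => ?_⟩
  have hmem : -y ∈ Set.Ioc (w - ε) w := by
    have h1 := hy.1
    have h2 := hy.2
    constructor <;> [linarith; linarith]
  show f (-y) = (pref q).eval y
  rw [pref_eval]
  exact hq (-y) hmem

lemma isLeftPiece_reflect {f : ℝ → ℝ} {w : ℝ} {q : Polynomial ℝ}
    (h : IsRightPiece f w q) : IsLeftPiece (fun t => f (-t)) (-w) (pref q) := by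
  obtain ⟨ε, hε, hq⟩ := h
  refine ⟨ε, hε, fun y hy => ?_⟩
  have hmem : -y ∈ Set.Ico w (w + ε) := by
    have h1 := hy.1
    have h2 := hy.2
    constructor <;> [linarith; linarith]
  show f (-y) = (pref q).eval y
  rw [pref_eval]
  exact hq (-y) hmem

lemma rightPoly_reflect {n : ℕ} {f : ℝ → ℝ} (hpp : IsNthPiecewisePoly n f) (z : ℝ) :
    rightPoly (fun t => f (-t)) z = pref (leftPoly f (-z)) := by
  obtain ⟨-, x, p, hm, ht, hb, hpc, -, -⟩ := hpp
  obtain ⟨q, hq⟩ := exists_leftPiece hm ht hb hpc (-z)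
  have h2 := isRightPiece_reflect hq
  rw [neg_neg] at h2
  rw [leftPoly_eq hq]
  exact rightPoly_eq h2

lemma leftPoly_reflect {n : ℕ} {f : ℝ → ℝ} (hpp : IsNthPiecewisePoly n f) (z : ℝ) :
    leftPoly (fun t => f (-t)) z = pref (rightPoly f (-z)) := by
  obtain ⟨-, x, p, hm, ht, hb, hpc, -, -⟩ := hpp
  obtain ⟨q, hq⟩ := exists_rightPiece hm ht hb hpc (-z)
  have h2 := isLeftPiece_reflect hq
  rw [neg_neg] at h2
  rw [rightPoly_eq hq]
  exact leftPoly_eq h2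

lemma sgnR_neg_eq (z : ℝ) : sgnR z = - sgnL (-z) := by
  unfold Trop.sgnR Trop.sgnL
  by_cases h : z < 0
  · simp [h, show (0:ℝ) < -z from by linarith]
  · have h2 : ¬ (0 < -z) := by
      have := not_lt.1 h
      linarith
    simp [h, h2]

lemma sgnL_neg_eq (z : ℝ) : sgnL z = - sgnR (-z) := by
  unfold Trop.sgnR Trop.sgnL
  by_cases h : 0 < z
  · simp [h, show -z < (0:ℝ) from by linarith]
  · have h2 : ¬ (-z < 0) := by
      have := not_lt.1 h
      linarith
    simp [h, h2]

lemma omega_reflect {n : ℕ} {f : ℝ → ℝ} (hpp : IsNthPiecewisePoly n f) (j : ℕ) (z : ℝ) :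
    omega (fun t => f (-t)) j z = omega f j (-z) := by
  have hR : rderiv (fun t => f (-t)) j z = (-1)^j * lderiv f j (-z) := by
    rw [rderiv, lderiv, rightPoly_reflect hpp z, pref_iter_derivative]
  have hL : lderiv (fun t => f (-t)) j z = (-1)^j * rderiv f j (-z) := by
    rw [lderiv, rderiv, leftPoly_reflect hpp z, pref_iter_derivative]
  have h1 : ∀ s L : ℝ, (-s)^(j+1) * ((-1:ℝ)^j * L) = -(s^(j+1) * L) := by
    intro s L
    have h : ((-1:ℝ))^j * (-1)^j = 1 := by rw [← mul_pow]; norm_num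
    have e : (-s)^(j+1) = (-1)^(j+1) * s^(j+1) := by rw [neg_pow]
    rw [e, pow_succ (-1:ℝ) j]
    linear_combination (-(s^(j+1) * L)) * h
  rw [omega, omega, hR, hL, sgnR_neg_eq z, sgnL_neg_eq z]
  congr 1
  rw [h1, h1]
  ring

lemma Npole_reflect {n : ℕ} {f : ℝ → ℝ} (hpp : IsNthPiecewisePoly n f) (j : ℕ) (S' : ℝ) :
    Npole j S' (fun t => f (-t)) = Npole j S' f := by
  rw [Npole, Npole]
  congr 1
  let e : {z : ℝ // z ∈ Set.Ioo (-S') S' ∧ omega f j z < 0} ≃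
      {z : ℝ // z ∈ Set.Ioo (-S') S' ∧ omega (fun t => f (-t)) j z < 0} :=
    { toFun := fun z => ⟨-z.1, ⟨Set.mem_Ioo.2 ⟨by have := z.2.1.2; linarith,
        by have := z.2.1.1; linarith⟩, by rw [omega_reflect hpp, neg_neg]; exact z.2.2⟩⟩
      invFun := fun z => ⟨-z.1, ⟨Set.mem_Ioo.2 ⟨by have := z.2.1.2; linarith,
        by have := z.2.1.1; linarith⟩, by
          have h := z.2.2
          rw [omega_reflect hpp] at h
          exact h⟩⟩
      left_inv := fun z => Subtype.ext (by simp)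
      right_inv := fun z => Subtype.ext (by simp) }
  rw [← Equiv.tsum_eq e (fun z => |omega (fun t => f (-t)) j z.1| * (S' - |z.1|) ^ j)]
  apply tsum_congr
  intro b
  simp only [e, Equiv.coe_fn_mk]
  rw [omega_reflect hpp, neg_neg, abs_neg]

lemma Tchar_reflect {n : ℕ} {f : ℝ → ℝ} (hpp : IsNthPiecewisePoly n f) (r : ℝ) :
    Tchar n r (fun t => f (-t)) = Tchar n r f := by
  rw [Tchar, Tchar]
  have h1 : mProx r (fun t => f (-t)) = mProx r f := by
    rw [mProx, mProx, neg_neg]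
    ring
  rw [h1]
  congr 1
  exact Finset.sum_congr rfl fun j _ => Npole_reflect hpp j r

lemma reflect_pp {n : ℕ} {f : ℝ → ℝ} (hpp : IsNthPiecewisePoly n f) :
    IsNthPiecewisePoly n (fun t => f (-t)) := by
  obtain ⟨hcont, x, p, hm, ht, hb, hpc, hdeg, hat⟩ := hpp
  refine ⟨hcont.comp continuous_neg, fun i => -x (-i), fun i => pref (p (1 - i)),
    ?_, ?_, ?_, ?_, ?_, ?_⟩
  · intro i j hij
    have := hm (show -j < -i by omega)
    simp only [neg_lt_neg_iff]
    exact this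
  · exact tendsto_neg_atBot_atTop.comp (hb.comp tendsto_neg_atTop_atBot)
  · exact tendsto_neg_atTop_atBot.comp (ht.comp tendsto_neg_atBot_atTop)
  · intro i y hy
    have e1 : (-(i - 1) : ℤ) = 1 - i := by ring
    have hy1 : -(x (1 - i)) ≤ y := by
      have h := hy.1
      simp only at h
      rwa [e1] at h
    have hy2 : y ≤ -(x (-i)) := hy.2
    have h1 : -y ∈ Set.Icc (x (1 - i - 1)) (x (1 - i)) := by
      constructor
      · rw [show (1 - i - 1 : ℤ) = -i from by ring]
        linarith
      · linarith
    show f (-y) = (pref (p (1 - i))).eval y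
    rw [pref_eval]
    exact hpc (1 - i) (-y) h1
  · intro i
    rw [pref_natDegree]
    exact hdeg _
  · obtain ⟨i, hi⟩ := hat
    exact ⟨1 - i, by rw [pref_natDegree, show (1 : ℤ) - (1 - i) = i from by ring, hi]⟩

lemma pref_sign {q : Polynomial ℝ} (h : WellDefinedPoly q) :
    (∀ k, 1 ≤ k → 0 ≤ (pref q).coeff k) ∨ (∀ k, 1 ≤ k → (pref q).coeff k ≤ 0) := by
  obtain ⟨hpar, hsign⟩ := h
  have key : ∀ k, 1 ≤ k →
      (pref q).coeff k = (-1:ℝ)^(q.natDegree % 2) * q.coeff k := by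
    intro k hk
    rw [pref_coeff]
    by_cases hkp : k % 2 = q.natDegree % 2
    · congr 1
      rcases Nat.mod_two_eq_zero_or_one k with hk2 | hk2
      · rw [Even.neg_one_pow (Nat.even_iff.2 hk2),
          Even.neg_one_pow (Nat.even_iff.2 (by omega))]
      · rw [Odd.neg_one_pow (Nat.odd_iff.2 hk2),
          Odd.neg_one_pow (Nat.odd_iff.2 (by omega))]
    · rw [hpar k hk hkp, mul_zero, mul_zero]
  have hval : (-1:ℝ)^(q.natDegree % 2) = 1 ∨ (-1:ℝ)^(q.natDegree % 2) = -1 := by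
    rcases Nat.mod_two_eq_zero_or_one q.natDegree with hd | hd
    · left; rw [hd, pow_zero]
    · right; rw [hd, pow_one]
  rcases hsign with hpos | hneg <;> rcases hval with hv | hv
  · left; intro k hk; rw [key k hk, hv, one_mul]; exact hpos k hk
  · right; intro k hk; rw [key k hk, hv]
    have := hpos k hk
    linarith
  · right; intro k hk; rw [key k hk, hv, one_mul]; exact hneg k hk
  · left; intro k hk; rw [key k hk, hv]
    have := hneg k hk
    linarith

/-! ### More helper lemmas -/

lemma omega_eq_tau_of_pos {f : ℝ → ℝ} {j : ℕ} {w : ℝ} (hw : 0 < w) :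
    omega f j w = tau f j w := by
  rw [omega, tau]
  have h1 : sgnR w = 1 := by rw [sgnR, if_neg (not_lt.2 hw.le)]
  have h2 : sgnL w = 1 := by rw [sgnL, if_pos hw]
  rw [h1, h2, one_pow, one_mul, one_mul]

lemma iter_deriv_eval_zero (q : Polynomial ℝ) (k : ℕ) :
    ((fun q : Polynomial ℝ => derivative q)^[k] q).eval 0 = k.factorial * q.coeff k := by
  have h : (fun q : Polynomial ℝ => derivative q)^[k] q = k.factorial • (hasseDeriv k) q := by
    show (⇑derivative)^[k] q = _
    rw [← Polynomial.factorial_smul_hasseDeriv]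
    rfl
  rw [h, Polynomial.eval_smul, ← coeff_zero_eq_eval_zero, Polynomial.hasseDeriv_coeff]
  simp [nsmul_eq_mul, Nat.choose_self]

lemma pref_pref (q : Polynomial ℝ) : pref (pref q) = q := by
  rw [pref, pref, comp_assoc]
  simp

lemma omega_zero_eq {n : ℕ} {f : ℝ → ℝ} (hpp : IsNthPiecewisePoly n f) (k : ℕ) :
    omega f k 0 = (rightPoly f 0).coeff k + (rightPoly (fun t => f (-t)) 0).coeff k := by
  have hQ : leftPoly f 0 = pref (rightPoly (fun t => f (-t)) 0) := by
    have h1 : rightPoly (fun t => f (-t)) 0 = pref (leftPoly f 0) := by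
      rw [rightPoly_reflect hpp 0, neg_zero]
    rw [h1, pref_pref]
  have hrd : rderiv f k 0 = k.factorial * (rightPoly f 0).coeff k := by
    rw [rderiv]
    exact iter_deriv_eval_zero _ k
  have hld : lderiv f k 0
      = (-1:ℝ)^k * (k.factorial * (rightPoly (fun t => f (-t)) 0).coeff k) := by
    rw [lderiv, hQ, pref_iter_derivative, neg_zero, iter_deriv_eval_zero]
  have h1 : sgnR 0 = 1 := by rw [sgnR, if_neg (by norm_num)]
  have h2 : sgnL (0:ℝ) = -1 := by rw [sgnL, if_neg (by norm_num)]
  rw [omega, hrd, hld, h1, h2, one_pow, one_mul]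
  have hfac : (k.factorial : ℝ) ≠ 0 := by exact_mod_cast k.factorial_ne_zero
  have hsq : ((-1:ℝ))^k * (-1)^k = 1 := by rw [← mul_pow]; norm_num
  have hh : (-1:ℝ)^(k+1) * (-1)^k = -1 := by
    rw [pow_succ]
    linear_combination (-1 : ℝ) * hsq
  rw [div_eq_iff hfac]
  linear_combination (-(k.factorial:ℝ) * (rightPoly (fun t => f (-t)) 0).coeff k) * hh

lemma abs_eq_posp_negp (a : ℝ) : |a| = max a 0 + max (-a) 0 := by
  rcases le_total a 0 with h | h
  · rw [abs_of_nonpos h, max_eq_right h, max_eq_left (by linarith)]; ring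
  · rw [abs_of_nonneg h, max_eq_left h, max_eq_right (by linarith)]; ring

lemma self_eq_posp_sub_negp (a : ℝ) : a = max a 0 - max (-a) 0 := by
  rcases le_total a 0 with h | h
  · rw [max_eq_right h, max_eq_left (by linarith)]; ring
  · rw [max_eq_left h, max_eq_right (by linarith)]; ring

/-! ### The core estimate -/

set_option maxHeartbeats 2000000 in
lemma core {n : ℕ} {f : ℝ → ℝ} (hpp : IsNthPiecewisePoly n f) (hwd : WellDefinedFn f)
    {α R u v : ℝ} (hα : 1 < α) (hR : 0 < R) (hu : 0 < u) (huv : u ≤ v) (hv : v ≤ R) :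
    |f v - f u| ≤ (v - u) / ((α - 1) * R) * (14 * Tchar n (α * R) f + 3 * |f 0|) := by
  set S' := α * R with hS'def
  have hRS : R < S' := by rw [hS'def]; nlinarith
  have hS0 : 0 < S' := lt_trans hR hRS
  set D := (α - 1) * R with hDdef
  have hD : 0 < D := by rw [hDdef]; nlinarith
  have hSRD : S' = R + D := by rw [hS'def, hDdef]; ring
  set T := Tchar n S' f with hT
  set NN := ∑ j ∈ Finset.Icc 1 n, Npole j S' f with hNN
  have hTsum : T = mProx S' f + NN := by rw [hT, Tchar, hNN]
  have hm0 : 0 ≤ mProx S' f := mProx_nonneg f S'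
  have hNN0 : 0 ≤ NN := by
    rw [hNN]
    exact Finset.sum_nonneg fun j _ => Npole_nonneg f j S'
  have hT0 : 0 ≤ T := by rw [hTsum]; linarith
  have hppg : IsNthPiecewisePoly n (fun t => f (-t)) := reflect_pp hpp
  have hNg : ∑ j ∈ Finset.Icc 1 n, Npole j S' (fun t => f (-t)) = NN := by
    rw [hNN]
    exact Finset.sum_congr rfl fun j _ => Npole_reflect hpp j S'
  -- representations
  obtain ⟨Z, hZ, hrep⟩ := repr_pos hpp hS0
  obtain ⟨Z', hZ', hrep'⟩ := repr_pos hppg hS0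
  set P := rightPoly f 0 with hPdef
  set P' := rightPoly (fun t => f (-t)) 0 with hP'def
  have hdegP : P.natDegree ≤ n := rightPoly_natDegree_le hpp 0
  have hdegP' : P'.natDegree ≤ n := rightPoly_natDegree_le hppg 0
  have hP0 : P.coeff 0 = f 0 := by
    rw [coeff_zero_eq_eval_zero, hPdef, rightPoly_eval_self hpp]
  have hP'0 : P'.coeff 0 = f 0 := by
    rw [coeff_zero_eq_eval_zero, hP'def, rightPoly_eval_self hppg, neg_zero]
  have hev : ∀ (q : Polynomial ℝ), q.natDegree ≤ n → ∀ t : ℝ,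
      q.eval t = q.coeff 0 + ∑ k ∈ Finset.Icc 1 n, q.coeff k * t ^ k := by
    intro q hq t
    rw [Polynomial.eval_eq_sum_range' (lt_of_le_of_lt hq (Nat.lt_succ_self n)) t]
    rw [show Finset.range (n+1) = insert 0 (Finset.Icc 1 n) from by
      ext a
      simp only [Finset.mem_range, Finset.mem_insert, Finset.mem_Icc]
      omega]
    rw [Finset.sum_insert (by simp)]
    rw [pow_zero, mul_one]
  set A := ∑ k ∈ Finset.Icc 1 n, |P.coeff k| * S' ^ k with hAdef
  set B := ∑ k ∈ Finset.Icc 1 n, |P'.coeff k| * S' ^ k with hBdef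
  -- pole (negative jump) sums are controlled by NN
  have NEGBOUND : ∀ (F : ℝ → ℝ), IsNthPiecewisePoly n F → ∀ (W : Finset ℝ),
      (∀ w ∈ W, 0 < w ∧ w ≤ S') →
      ∑ w ∈ W, ∑ j ∈ Finset.Icc 1 n, max (-(tau F j w)) 0 * (S' - w)^j
        ≤ 2 * ∑ j ∈ Finset.Icc 1 n, Npole j S' F := by
    intro F hF W hW
    rw [Finset.sum_comm, Finset.mul_sum]
    apply Finset.sum_le_sum
    intro j hj
    have hj1 : 1 ≤ j := (Finset.mem_Icc.1 hj).1
    have hsplit : ∑ w ∈ W, max (-(tau F j w)) 0 * (S' - w)^j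
        = ∑ w ∈ W.filter (fun w => tau F j w < 0 ∧ w < S'),
            max (-(tau F j w)) 0 * (S' - w)^j := by
      rw [← Finset.sum_filter_add_sum_filter_not W (fun w => tau F j w < 0 ∧ w < S')]
      have hzero : ∑ w ∈ W.filter (fun w => ¬(tau F j w < 0 ∧ w < S')),
          max (-(tau F j w)) 0 * (S' - w)^j = 0 := by
        apply Finset.sum_eq_zero
        intro w hw
        have hw1 := (Finset.mem_filter.1 hw).2
        have hwW := (Finset.mem_filter.1 hw).1
        push_neg at hw1
        by_cases hτ : tau F j w < 0
        · have hwS : w = S' := le_antisymm ((hW w hwW).2) (hw1 hτ)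
          rw [hwS, sub_self, zero_pow (by omega), mul_zero]
        · rw [max_eq_right (by linarith [not_lt.1 hτ]), zero_mul]
      linarith
    rw [hsplit]
    have heq : ∑ w ∈ W.filter (fun w => tau F j w < 0 ∧ w < S'),
          max (-(tau F j w)) 0 * (S' - w)^j
        = ∑ w ∈ W.filter (fun w => tau F j w < 0 ∧ w < S'),
            |omega F j w| * (S' - |w|)^j := by
      apply Finset.sum_congr rfl
      intro w hw
      have hwf := Finset.mem_filter.1 hw
      have hw0 : 0 < w := (hW w hwf.1).1
      rw [omega_eq_tau_of_pos hw0, abs_of_neg hwf.2.1, abs_of_pos hw0,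
        max_eq_left (by linarith [hwf.2.1])]
    rw [heq]
    apply finsetsum_le_Npole hF
    intro w hw
    have hwf := Finset.mem_filter.1 hw
    have hw0 : 0 < w := (hW w hwf.1).1
    exact ⟨Set.mem_Ioo.2 ⟨by linarith, hwf.2.2⟩,
      by rw [omega_eq_tau_of_pos hw0]; exact hwf.2.1⟩
  -- splitting jump sums at S'
  have hsplitF : ∀ (F : ℝ → ℝ) (W : Finset ℝ), (∀ w ∈ W, 0 < w ∧ w ≤ S') →
      ∑ w ∈ W, ∑ j ∈ Finset.Icc 1 n, tau F j w * max (S' - w) 0 ^ j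
        = (∑ w ∈ W, ∑ j ∈ Finset.Icc 1 n, max (tau F j w) 0 * (S' - w) ^ j)
          - ∑ w ∈ W, ∑ j ∈ Finset.Icc 1 n, max (-(tau F j w)) 0 * (S' - w) ^ j := by
    intro F W hW
    rw [← Finset.sum_sub_distrib]
    apply Finset.sum_congr rfl
    intro w hw
    rw [← Finset.sum_sub_distrib]
    apply Finset.sum_congr rfl
    intro j hj
    have h1 : max (S' - w) 0 = S' - w := max_eq_left (by linarith [(hW w hw).2])
    rw [h1]
    calc tau F j w * (S' - w)^j
        = (max (tau F j w) 0 - max (-(tau F j w)) 0) * (S'-w)^j := by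
          rw [← self_eq_posp_sub_negp]
      _ = _ := by ring
  -- nonnegativity of split sums
  have hsumnn : ∀ (F : ℝ → ℝ) (G : ℝ → ℕ → ℝ) (W : Finset ℝ),
      (∀ w ∈ W, 0 < w ∧ w ≤ S') → (∀ w j, 0 ≤ G w j) →
      0 ≤ ∑ w ∈ W, ∑ j ∈ Finset.Icc 1 n, G w j * (S' - w) ^ j := by
    intro F G W hW hG
    apply Finset.sum_nonneg
    intro w hw
    apply Finset.sum_nonneg
    intro j hj
    have := (hW w hw).2
    have h2 : (0:ℝ) ≤ (S' - w)^j := pow_nonneg (by linarith) j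
    exact mul_nonneg (hG w j) h2
  set NEGf := ∑ w ∈ Z, ∑ j ∈ Finset.Icc 1 n, max (-(tau f j w)) 0 * (S' - w) ^ j with hNEGf
  set POSf := ∑ w ∈ Z, ∑ j ∈ Finset.Icc 1 n, max (tau f j w) 0 * (S' - w) ^ j with hPOSf
  set NEGg := ∑ w ∈ Z', ∑ j ∈ Finset.Icc 1 n,
    max (-(tau (fun t => f (-t)) j w)) 0 * (S' - w) ^ j with hNEGg
  set POSg := ∑ w ∈ Z', ∑ j ∈ Finset.Icc 1 n,
    max (tau (fun t => f (-t)) j w) 0 * (S' - w) ^ j with hPOSg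
  have hNEGf0 : 0 ≤ NEGf := hsumnn f _ Z hZ (fun w j => le_max_right _ _)
  have hPOSf0 : 0 ≤ POSf := hsumnn f _ Z hZ (fun w j => le_max_right _ _)
  have hNEGg0 : 0 ≤ NEGg := hsumnn (fun t => f (-t)) _ Z' hZ' (fun w j => le_max_right _ _)
  have hPOSg0 : 0 ≤ POSg := hsumnn (fun t => f (-t)) _ Z' hZ' (fun w j => le_max_right _ _)
  have hNEGfB : NEGf ≤ 2 * NN := by
    rw [hNEGf, hNN]
    exact NEGBOUND f hpp Z hZ
  have hNEGgB : NEGg ≤ 2 * NN := by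
    rw [hNEGg, ← hNg]
    exact NEGBOUND (fun t => f (-t)) hppg Z' hZ'
  -- values at S'
  have hfS : f S' = P.eval S' + (POSf - NEGf) := by
    rw [← hsplitF f Z hZ]
    exact hrep S' hS0.le le_rfl
  have hgS : f (-S') = P'.eval S' + (POSg - NEGg) := by
    rw [← hsplitF (fun t => f (-t)) Z' hZ']
    exact hrep' S' hS0.le le_rfl
  have hfS2m : f S' ≤ 2 * mProx S' f := by
    rw [mProx]
    have h1 := le_max_left (f S') 0
    have h2 := le_max_right (f (-S')) 0
    linarith
  have hgS2m : f (-S') ≤ 2 * mProx S' f := by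
    rw [mProx]
    have h1 := le_max_left (f (-S')) 0
    have h2 := le_max_right (f S') 0
    linarith
  have habs1 : -|f 0| ≤ f 0 := neg_abs_le (f 0)
  have habs2 : f 0 ≤ |f 0| := le_abs_self (f 0)
  -- |Σ P_k S'^k| ≤ A facts
  have hPsumabs : |∑ k ∈ Finset.Icc 1 n, P.coeff k * S' ^ k| ≤ A := by
    refine le_trans (Finset.abs_sum_le_sum_abs _ _) (le_of_eq ?_)
    rw [hAdef]
    apply Finset.sum_congr rfl
    intro k hk
    rw [abs_mul, abs_of_nonneg (pow_nonneg hS0.le k)]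
  have hPS : P.eval S' = f 0 + ∑ k ∈ Finset.Icc 1 n, P.coeff k * S' ^ k := by
    rw [hev P hdegP, hP0]
  have hP'S : P'.eval S' = f 0 + ∑ k ∈ Finset.Icc 1 n, P'.coeff k * S' ^ k := by
    rw [hev P' hdegP', hP'0]
  -- sign dichotomies
  have hsP : (∀ k, 1 ≤ k → 0 ≤ P.coeff k) ∨ (∀ k, 1 ≤ k → P.coeff k ≤ 0) := (hwd 0).1.2
  have hsP' : (∀ k, 1 ≤ k → 0 ≤ P'.coeff k) ∨ (∀ k, 1 ≤ k → P'.coeff k ≤ 0) := by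
    have hQ : WellDefinedPoly (leftPoly f 0) := (hwd 0).2
    have hePP : P' = pref (leftPoly f 0) := by
      rw [hP'def, rightPoly_reflect hpp 0, neg_zero]
    rw [hePP]
    exact pref_sign hQ
  -- the A bound
  have hωkey : ∀ k, omega f k 0 = P.coeff k + P'.coeff k := fun k => omega_zero_eq hpp k
  have hAbound : A ≤ 4 * T + |f 0| := by
    rcases hsP with hpos | hneg
    · have hAeq : (∑ k ∈ Finset.Icc 1 n, P.coeff k * S' ^ k) = A := by
        rw [hAdef]
        apply Finset.sum_congr rfl
        intro k hk
        rw [abs_of_nonneg (hpos k (Finset.mem_Icc.1 hk).1)]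
      rw [hPS] at hfS
      have : A = f S' - f 0 - (POSf - NEGf) := by rw [← hAeq]; linarith only [hfS]
      linarith only [this, hfS2m, hPOSf0, hNEGfB, hTsum, hm0, hNN0, hT0, habs1]
    · rcases hsP' with hpos' | hneg'
      · -- P nonpos, P' nonneg
        have hBeq : (∑ k ∈ Finset.Icc 1 n, P'.coeff k * S' ^ k) = B := by
          rw [hBdef]
          apply Finset.sum_congr rfl
          intro k hk
          rw [abs_of_nonneg (hpos' k (Finset.mem_Icc.1 hk).1)]
        rw [hP'S] at hgS
        have hBB : B ≤ 2 * mProx S' f + |f 0| + 2 * NN := by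
          have : B = f (-S') - f 0 - (POSg - NEGg) := by rw [← hBeq]; linarith only [hgS]
          linarith only [this, hgS2m, hPOSg0, hNEGgB, habs1]
        have hk : ∀ k ∈ Finset.Icc 1 n,
            |P.coeff k| * S'^k ≤ |P'.coeff k| * S'^k + 2 * Npole k S' f := by
          intro k hk
          have hk1 : 1 ≤ k := (Finset.mem_Icc.1 hk).1
          have hPk := hneg k hk1
          have hP'k := hpos' k hk1
          have hω := hωkey k
          by_cases hω0 : omega f k 0 < 0
          · have h1 : |P.coeff k| ≤ |P'.coeff k| + |omega f k 0| := by
              rw [abs_of_nonpos hPk, abs_of_nonneg hP'k, abs_of_neg hω0]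
              linarith
            have h2 := zero_pole_le_Npole hpp hS0 hω0
            have h3 : |P.coeff k| * S'^k ≤ (|P'.coeff k| + |omega f k 0|) * S'^k :=
              mul_le_mul_of_nonneg_right h1 (pow_nonneg hS0.le k)
            have h4 : |omega f k 0| * S'^k ≤ 2 * Npole k S' f := h2
            have h5 : (|P'.coeff k| + |omega f k 0|) * S'^k
                = |P'.coeff k| * S'^k + |omega f k 0| * S'^k := by ring
            linarith only [h3, h4, h5]
          · have h0 : 0 ≤ omega f k 0 := not_lt.1 hω0
            rw [hω] at h0
            have h1 : |P.coeff k| ≤ |P'.coeff k| := by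
              rw [abs_of_nonpos hPk, abs_of_nonneg hP'k]
              linarith
            have h2 := Npole_nonneg f k S'
            have h3 : |P.coeff k| * S'^k ≤ |P'.coeff k| * S'^k :=
              mul_le_mul_of_nonneg_right h1 (pow_nonneg hS0.le k)
            linarith only [h2, h3]
        have hAB : A ≤ B + 2 * NN := by
          rw [hAdef, hBdef, hNN, Finset.mul_sum, ← Finset.sum_add_distrib]
          exact Finset.sum_le_sum hk
        linarith only [hAB, hBB, hTsum, hm0, hNN0, hT0, habs2, habs1]
      · -- P nonpos, P' nonpos
        have hk : ∀ k ∈ Finset.Icc 1 n, |P.coeff k| * S'^k ≤ 2 * Npole k S' f := by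
          intro k hk
          have hk1 : 1 ≤ k := (Finset.mem_Icc.1 hk).1
          have hPk := hneg k hk1
          have hP'k := hneg' k hk1
          have hω := hωkey k
          by_cases hω0 : omega f k 0 < 0
          · have h1 : |P.coeff k| ≤ |omega f k 0| := by
              rw [abs_of_nonpos hPk, abs_of_neg hω0]
              linarith
            have h2 := zero_pole_le_Npole hpp hS0 hω0
            have h3 : |P.coeff k| * S'^k ≤ |omega f k 0| * S'^k :=
              mul_le_mul_of_nonneg_right h1 (pow_nonneg hS0.le k)
            linarith only [h2, h3]
          · have h0 : 0 ≤ omega f k 0 := not_lt.1 hω0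
            rw [hω] at h0
            have hPk0 : P.coeff k = 0 := by linarith
            rw [hPk0, abs_zero, zero_mul]
            exact mul_nonneg (by norm_num) (Npole_nonneg f k S')
        have : A ≤ 2 * NN := by
          rw [hAdef, hNN, Finset.mul_sum]
          exact Finset.sum_le_sum hk
        linarith only [this, hTsum, hm0, hNN0, hT0, abs_nonneg (f 0)]
  -- bound on POSf
  have hPOSbound : POSf ≤ 2 * mProx S' f + |f 0| + A + 2 * NN := by
    rw [hPS] at hfS
    have h1 := neg_abs_le (∑ k ∈ Finset.Icc 1 n, P.coeff k * S' ^ k)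
    linarith only [hfS, h1, hPsumabs, hfS2m, hNEGfB, habs1]
  -- pointwise difference bound
  have hdiff : ∀ w, 0 ≤ w → w ≤ S' → ∀ j, 1 ≤ j →
      max (v - w) 0 ^ j - max (u - w) 0 ^ j ≤ (v - u) * (S' - w) ^ j / D := by
    intro w hw hwS j hj
    rw [hSRD]
    exact pow_diff_bound hu.le huv hv hw (by rw [← hSRD]; exact hwS) hD hj
  have hdiffnn : ∀ w j, 0 ≤ max (v - w) 0 ^ j - max (u - w) 0 ^ j := by
    intro w j
    have h1 : max (u - w) 0 ≤ max (v - w) 0 := max_le_max (by linarith) le_rfl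
    have h2 : (0:ℝ) ≤ max (u - w) 0 := le_max_right _ _
    have := pow_le_pow_left₀ h2 h1 j
    linarith
  -- P part
  have hPpart : |P.eval v - P.eval u| ≤ (v - u) / D * A := by
    rw [hev P hdegP v, hev P hdegP u]
    have heq : (f 0 + ∑ k ∈ Finset.Icc 1 n, P.coeff k * v ^ k)
        - (f 0 + ∑ k ∈ Finset.Icc 1 n, P.coeff k * u ^ k)
        = ∑ k ∈ Finset.Icc 1 n, P.coeff k * (v ^ k - u ^ k) := by
      have h4 : ∑ k ∈ Finset.Icc 1 n, P.coeff k * (v ^ k - u ^ k)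
          = (∑ k ∈ Finset.Icc 1 n, P.coeff k * v ^ k)
            - ∑ k ∈ Finset.Icc 1 n, P.coeff k * u ^ k := by
        rw [← Finset.sum_sub_distrib]
        apply Finset.sum_congr rfl
        intro k _
        ring
      rw [h4]
      ring
    rw [hP0, heq]
    refine le_trans (Finset.abs_sum_le_sum_abs _ _) ?_
    have hbound : ∀ k ∈ Finset.Icc 1 n,
        |P.coeff k * (v ^ k - u ^ k)| ≤ |P.coeff k| * ((v - u) * S' ^ k / D) := by
      intro k hk
      have hk1 : 1 ≤ k := (Finset.mem_Icc.1 hk).1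
      rw [abs_mul]
      apply mul_le_mul_of_nonneg_left _ (abs_nonneg _)
      have h1 := hdiff 0 le_rfl hS0.le k hk1
      rw [sub_zero, sub_zero, sub_zero,
        max_eq_left (by linarith : (0:ℝ) ≤ v), max_eq_left hu.le] at h1
      have h2 : 0 ≤ v ^ k - u ^ k := by
        have := pow_le_pow_left₀ hu.le huv k
        linarith
      rw [abs_of_nonneg h2]
      exact h1
    refine le_trans (Finset.sum_le_sum hbound) (le_of_eq ?_)
    rw [hAdef, Finset.mul_sum]
    apply Finset.sum_congr rfl
    intro k hk
    ring
  -- jump part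
  have hFpart : |(∑ w ∈ Z, ∑ j ∈ Finset.Icc 1 n, tau f j w * max (v - w) 0 ^ j)
      - ∑ w ∈ Z, ∑ j ∈ Finset.Icc 1 n, tau f j w * max (u - w) 0 ^ j|
      ≤ (v - u) / D * (POSf + NEGf) := by
    rw [← Finset.sum_sub_distrib]
    refine le_trans (Finset.abs_sum_le_sum_abs _ _) ?_
    have hstep : ∀ w ∈ Z, |(∑ j ∈ Finset.Icc 1 n, tau f j w * max (v - w) 0 ^ j)
        - ∑ j ∈ Finset.Icc 1 n, tau f j w * max (u - w) 0 ^ j|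
        ≤ ∑ j ∈ Finset.Icc 1 n, |tau f j w| * ((v - u) * (S' - w) ^ j / D) := by
      intro w hw
      rw [← Finset.sum_sub_distrib]
      refine le_trans (Finset.abs_sum_le_sum_abs _ _) ?_
      apply Finset.sum_le_sum
      intro j hj
      have hj1 : 1 ≤ j := (Finset.mem_Icc.1 hj).1
      have he : tau f j w * max (v - w) 0 ^ j - tau f j w * max (u - w) 0 ^ j
          = tau f j w * (max (v - w) 0 ^ j - max (u - w) 0 ^ j) := by ring
      rw [he, abs_mul]
      apply mul_le_mul_of_nonneg_left _ (abs_nonneg _)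
      rw [abs_of_nonneg (hdiffnn w j)]
      exact hdiff w (hZ w hw).1.le (hZ w hw).2 j hj1
    refine le_trans (Finset.sum_le_sum hstep) (le_of_eq ?_)
    have he2 : ∀ w ∈ Z, ∑ j ∈ Finset.Icc 1 n, |tau f j w| * ((v - u) * (S' - w) ^ j / D)
        = (v - u) / D * ∑ j ∈ Finset.Icc 1 n,
            (max (tau f j w) 0 * (S' - w) ^ j + max (-(tau f j w)) 0 * (S' - w) ^ j) := by
      intro w hw
      rw [Finset.mul_sum]
      apply Finset.sum_congr rfl
      intro j hj
      rw [abs_eq_posp_negp (tau f j w)]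
      ring
    rw [Finset.sum_congr rfl he2, ← Finset.mul_sum, hPOSf, hNEGf, ← Finset.sum_add_distrib]
    congr 1
    apply Finset.sum_congr rfl
    intro w hw
    rw [← Finset.sum_add_distrib]
  -- final assembly
  have hfu : f u = P.eval u + ∑ w ∈ Z, ∑ j ∈ Finset.Icc 1 n, tau f j w * max (u - w) 0 ^ j :=
    hrep u hu.le (by linarith)
  have hfv : f v = P.eval v + ∑ w ∈ Z, ∑ j ∈ Finset.Icc 1 n, tau f j w * max (v - w) 0 ^ j :=
    hrep v (by linarith) (by linarith)
  have hsplit2 : f v - f u = (P.eval v - P.eval u)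
      + ((∑ w ∈ Z, ∑ j ∈ Finset.Icc 1 n, tau f j w * max (v - w) 0 ^ j)
        - ∑ w ∈ Z, ∑ j ∈ Finset.Icc 1 n, tau f j w * max (u - w) 0 ^ j) := by
    rw [hfu, hfv]
    ring
  have hmain : |f v - f u| ≤ (v - u) / D * (A + (POSf + NEGf)) := by
    rw [hsplit2]
    refine le_trans (abs_add_le _ _) ?_
    rw [mul_add]
    linarith only [hPpart, hFpart]
  have hfinal : A + (POSf + NEGf) ≤ 14 * T + 3 * |f 0| := by
    linarith only [hAbound, hPOSbound, hNEGfB, hTsum, hm0, hNN0, hT0, habs2, habs1]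
  refine le_trans hmain ?_
  apply mul_le_mul_of_nonneg_left hfinal
  exact div_nonneg (by linarith) hD.le

lemma wd_pref {q : Polynomial ℝ} (h : WellDefinedPoly q) : WellDefinedPoly (pref q) := by
  obtain ⟨hpar, hsign⟩ := h
  constructor
  · intro k hk hkp
    rw [pref_natDegree] at hkp
    rw [pref_coeff, hpar k hk hkp, mul_zero]
  · exact pref_sign ⟨hpar, hsign⟩

lemma wd_reflect {n : ℕ} {f : ℝ → ℝ} (hpp : IsNthPiecewisePoly n f)
    (hwd : WellDefinedFn f) : WellDefinedFn (fun t => f (-t)) := by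
  intro z
  constructor
  · rw [rightPoly_reflect hpp z]
    exact wd_pref (hwd (-z)).2
  · rw [leftPoly_reflect hpp z]
    exact wd_pref (hwd (-z)).1

lemma final_step {n : ℕ} {f : ℝ → ℝ} {α R cabs : ℝ} (hα : 1 < α) (hR : 0 < R)
    (hc : 0 ≤ cabs) {X : ℝ}
    (h : X ≤ cabs / ((α - 1) * R) * (14 * Tchar n (α * R) f + 3 * |f 0|)) :
    X ≤ 32 * cabs / ((α - 1) * R) * (Tchar n (α * R) f + |f 0| / 2) := by
  have hD : 0 < (α - 1) * R := by nlinarith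
  have hT := Tchar_nonneg n f (α * R)
  have habs := abs_nonneg (f 0)
  have h0 : 0 ≤ cabs / ((α - 1) * R) := div_nonneg hc hD.le
  have e : 32 * cabs / ((α-1)*R) * (Tchar n (α*R) f + |f 0|/2)
      - cabs / ((α-1)*R) * (14 * Tchar n (α*R) f + 3*|f 0|)
      = cabs / ((α-1)*R) * (18 * Tchar n (α*R) f + 13 * |f 0|) := by ring
  have h1 : 0 ≤ cabs / ((α-1)*R) * (18 * Tchar n (α*R) f + 13 * |f 0|) :=
    mul_nonneg h0 (by linarith)
  linarith

end TropAux
end TropAux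

/-- Lemma 4.4: pointwise shift estimate for a well defined `n`-th tropical
meromorphic function. -/
theorem statement9 (n : ℕ) (hn : 1 ≤ n) (f : ℝ → ℝ)
    (hf : Trop.IsTropicalMeromorphic n f) (hwd : Trop.WellDefinedFn f)
    (α : ℝ) (hα : 1 < α) (c : ℝ) (hc : c ≠ 0)
    (r : ℝ) (hr : max (2 * |c|) ((3 - α) / (α - 1) * |c|) < r)
    (δ : ℝ) (hδ : δ = 1 ∨ δ = -1) :
    |f (δ * r + c) - f (δ * r)| ≤
      32 * |c| / ((α - 1) * (r + |c|)) *
        (Trop.Tchar n (α * (r + |c|)) f + |f 0| / 2) := by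
  have hpp : Trop.IsNthPiecewisePoly n f := hf.1
  have hc0 : 0 < |c| := abs_pos.2 hc
  have h2c : 2 * |c| < r := lt_of_le_of_lt (le_max_left _ _) hr
  have hR : 0 < r + |c| := by linarith
  have hca : -|c| ≤ c := neg_abs_le c
  have hcb : c ≤ |c| := le_abs_self c
  rcases hδ with h1 | h1
  · subst h1
    rw [one_mul]
    rcases le_total 0 c with hcpos | hcneg
    · have hcore := TropAux.core hpp hwd hα hR
        (show (0:ℝ) < r by linarith) (show r ≤ r + c by linarith)
        (show r + c ≤ r + |c| by linarith)
      rw [show r + c - r = |c| from by rw [abs_of_nonneg hcpos]; ring] at hcore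
      exact TropAux.final_step hα hR hc0.le hcore
    · have hcore := TropAux.core hpp hwd hα hR
        (show (0:ℝ) < r + c by linarith) (show r + c ≤ r by linarith)
        (show r ≤ r + |c| by linarith)
      rw [show r - (r + c) = |c| from by rw [abs_of_nonpos hcneg]; ring] at hcore
      rw [abs_sub_comm]
      exact TropAux.final_step hα hR hc0.le hcore
  · subst h1
    have hppg : Trop.IsNthPiecewisePoly n (fun t => f (-t)) := TropAux.reflect_pp hpp
    have hwdg : Trop.WellDefinedFn (fun t => f (-t)) := TropAux.wd_reflect hpp hwd
    have hbeta : (fun t : ℝ => f (-t)) 0 = f 0 := by norm_num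
    rcases le_total 0 c with hcpos | hcneg
    · have hcore0 := TropAux.core hppg hwdg hα hR
        (show (0:ℝ) < r - c by linarith) (show r - c ≤ r by linarith)
        (show r ≤ r + |c| by linarith)
      have hcore : |f (-r) - f (-(r - c))| ≤ (r - (r - c)) / ((α - 1) * (r + |c|)) *
          (14 * Trop.Tchar n (α * (r + |c|)) (fun t => f (-t))
            + 3 * |(fun t : ℝ => f (-t)) 0|) := hcore0
      rw [TropAux.Tchar_reflect hpp, hbeta,
        show -(r - c) = -1 * r + c from by ring,
        show (-r : ℝ) = -1 * r from by ring,
        show r - (r - c) = |c| from by rw [abs_of_nonneg hcpos]; ring] at hcore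
      rw [abs_sub_comm]
      exact TropAux.final_step hα hR hc0.le hcore
    · have hcore0 := TropAux.core hppg hwdg hα hR
        (show (0:ℝ) < r by linarith) (show r ≤ r - c by linarith)
        (show r - c ≤ r + |c| by linarith)
      have hcore : |f (-(r - c)) - f (-r)| ≤ (r - c - r) / ((α - 1) * (r + |c|)) *
          (14 * Trop.Tchar n (α * (r + |c|)) (fun t => f (-t))
            + 3 * |(fun t : ℝ => f (-t)) 0|) := hcore0
      rw [TropAux.Tchar_reflect hpp, hbeta,
        show -(r - c) = -1 * r + c from by ring,
        show (-r : ℝ) = -1 * r from by ring,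
        show r - c - r = |c| from by rw [abs_of_nonpos hcneg]; ring] at hcore
      exact TropAux.final_step hα hR hc0.le hcore
end

section
/- Let n ≥ 1 and let g = g₁ − g₀ be an n-th tropical meromorphic function, where g₀ and g₁ are tropical entire functions having no common j-th roots for any j, and set f = [g₀ : g₁] (a tropical holomorphic curve into TP¹). Then for every r > 0, T_f(r) = T(r, g) − g⁺(0), where g⁺ = max{g, 0}. -/
open Filter MeasureTheory Asymptotics Polynomial
open scoped Classical

noncomputable section

namespace S13
open Trop Polynomial Filter

/-! ### Basic facts about one-sided pieces -/

theorem rightPiece_unique {f : ℝ → ℝ} {z : ℝ} {p q : Polynomial ℝ}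
    (hp : Trop.IsRightPiece f z p) (hq : Trop.IsRightPiece f z q) : p = q := by
  obtain ⟨ε, hε, hp⟩ := hp
  obtain ⟨δ, hδ, hq⟩ := hq
  refine Polynomial.eq_of_infinite_eval_eq p q ?_
  have hlt : z < z + min ε δ := by have := lt_min hε hδ; linarith
  refine (Set.Ico_infinite hlt).mono ?_
  intro y hy
  have h1 : y ∈ Set.Ico z (z + ε) := ⟨hy.1, lt_of_lt_of_le hy.2 (by gcongr; exact min_le_left _ _)⟩
  have h2 : y ∈ Set.Ico z (z + δ) := ⟨hy.1, lt_of_lt_of_le hy.2 (by gcongr; exact min_le_right _ _)⟩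
  exact Set.mem_setOf_eq ▸ ((hp y h1).symm.trans (hq y h2))

theorem leftPiece_unique {f : ℝ → ℝ} {z : ℝ} {p q : Polynomial ℝ}
    (hp : Trop.IsLeftPiece f z p) (hq : Trop.IsLeftPiece f z q) : p = q := by
  obtain ⟨ε, hε, hp⟩ := hp
  obtain ⟨δ, hδ, hq⟩ := hq
  refine Polynomial.eq_of_infinite_eval_eq p q ?_
  have hlt : z - min ε δ < z := by have := lt_min hε hδ; linarith
  refine (Set.Ioo_infinite hlt).mono ?_
  intro y hy
  have h1 : y ∈ Set.Ioc (z - ε) z := ⟨lt_of_le_of_lt (by gcongr; exact min_le_left _ _) hy.1, hy.2.le⟩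
  have h2 : y ∈ Set.Ioc (z - δ) z := ⟨lt_of_le_of_lt (by gcongr; exact min_le_right _ _) hy.1, hy.2.le⟩
  exact Set.mem_setOf_eq ▸ ((hp y h1).symm.trans (hq y h2))

theorem rightPoly_eq {f : ℝ → ℝ} {z : ℝ} {p : Polynomial ℝ} (hp : Trop.IsRightPiece f z p) :
    Trop.rightPoly f z = p := by
  have hex : ∃ q, Trop.IsRightPiece f z q := ⟨p, hp⟩
  rw [Trop.rightPoly, dif_pos hex]
  exact rightPiece_unique hex.choose_spec hp

theorem leftPoly_eq {f : ℝ → ℝ} {z : ℝ} {p : Polynomial ℝ} (hp : Trop.IsLeftPiece f z p) :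
    Trop.leftPoly f z = p := by
  have hex : ∃ q, Trop.IsLeftPiece f z q := ⟨p, hp⟩
  rw [Trop.leftPoly, dif_pos hex]
  exact leftPiece_unique hex.choose_spec hp

theorem isRightPiece_sub {f₁ f₀ : ℝ → ℝ} {z : ℝ} {p₁ p₀ : Polynomial ℝ}
    (h1 : Trop.IsRightPiece f₁ z p₁) (h0 : Trop.IsRightPiece f₀ z p₀) :
    Trop.IsRightPiece (fun x => f₁ x - f₀ x) z (p₁ - p₀) := by
  obtain ⟨ε₁, he1, h1⟩ := h1
  obtain ⟨ε₀, he0, h0⟩ := h0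
  refine ⟨min ε₁ ε₀, lt_min he1 he0, fun y hy => ?_⟩
  have hy1 : y ∈ Set.Ico z (z + ε₁) := ⟨hy.1, lt_of_lt_of_le hy.2 (by gcongr; exact min_le_left _ _)⟩
  have hy0 : y ∈ Set.Ico z (z + ε₀) := ⟨hy.1, lt_of_lt_of_le hy.2 (by gcongr; exact min_le_right _ _)⟩
  simp only [Polynomial.eval_sub, ← h1 y hy1, ← h0 y hy0]

theorem isLeftPiece_sub {f₁ f₀ : ℝ → ℝ} {z : ℝ} {p₁ p₀ : Polynomial ℝ}
    (h1 : Trop.IsLeftPiece f₁ z p₁) (h0 : Trop.IsLeftPiece f₀ z p₀) :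
    Trop.IsLeftPiece (fun x => f₁ x - f₀ x) z (p₁ - p₀) := by
  obtain ⟨ε₁, he1, h1⟩ := h1
  obtain ⟨ε₀, he0, h0⟩ := h0
  refine ⟨min ε₁ ε₀, lt_min he1 he0, fun y hy => ?_⟩
  have hy1 : y ∈ Set.Ioc (z - ε₁) z := ⟨lt_of_le_of_lt (by gcongr; exact min_le_left _ _) hy.1, hy.2⟩
  have hy0 : y ∈ Set.Ioc (z - ε₀) z := ⟨lt_of_le_of_lt (by gcongr; exact min_le_right _ _) hy.1, hy.2⟩
  simp only [Polynomial.eval_sub, ← h1 y hy1, ← h0 y hy0]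

/-! ### Piecewise data -/

structure PW (f : ℝ → ℝ) (N : ℕ) where
  x : ℤ → ℝ
  p : ℤ → Polynomial ℝ
  mono : StrictMono x
  htop : Tendsto x atTop atTop
  hbot : Tendsto x atBot atBot
  heval : ∀ i : ℤ, ∀ y ∈ Set.Icc (x (i - 1)) (x i), f y = (p i).eval y
  hdeg : ∀ i : ℤ, (p i).natDegree ≤ N

theorem pw_of {f : ℝ → ℝ} {n : ℕ} (h : Trop.IsNthPiecewisePoly n f) : Nonempty (PW f n) := by
  obtain ⟨-, x, p, h1, h2, h3, h4, h5, -⟩ := h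
  exact ⟨⟨x, p, h1, h2, h3, h4, h5⟩⟩

def PW.weaken {f : ℝ → ℝ} {N M : ℕ} (pw : PW f N) (h : N ≤ M) : PW f M :=
  ⟨pw.x, pw.p, pw.mono, pw.htop, pw.hbot, pw.heval, fun i => (pw.hdeg i).trans h⟩

theorem PW.locR {f : ℝ → ℝ} {N : ℕ} (pw : PW f N) (z : ℝ) :
    ∃ i : ℤ, pw.x (i - 1) ≤ z ∧ z < pw.x i := by
  obtain ⟨b, hb⟩ := Filter.eventually_atBot.1 (pw.hbot.eventually_lt_atBot z)
  have hbdd : ∃ b : ℤ, ∀ i : ℤ, z < pw.x i → b ≤ i := by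
    refine ⟨b, fun i hi => le_of_not_gt fun h => ?_⟩
    exact absurd hi (not_lt.2 (hb i h.le).le)
  obtain ⟨lb, hlb, hmin⟩ := Int.exists_least_of_bdd hbdd (pw.htop.eventually_gt_atTop z).exists
  refine ⟨lb, ?_, hlb⟩
  by_contra h
  push_neg at h
  have := hmin _ h
  omega

theorem PW.locL {f : ℝ → ℝ} {N : ℕ} (pw : PW f N) (z : ℝ) :
    ∃ i : ℤ, pw.x (i - 1) < z ∧ z ≤ pw.x i := by
  obtain ⟨b, hb⟩ := Filter.eventually_atBot.1 (pw.hbot.eventually_lt_atBot z)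
  have hbdd : ∃ b : ℤ, ∀ i : ℤ, z ≤ pw.x i → b ≤ i := by
    refine ⟨b, fun i hi => le_of_not_gt fun h => ?_⟩
    exact absurd hi (not_le.2 (hb i h.le))
  obtain ⟨lb, hlb, hmin⟩ := Int.exists_least_of_bdd hbdd
    ⟨_, ((pw.htop.eventually_gt_atTop z).exists.choose_spec).le⟩
  refine ⟨lb, ?_, hlb⟩
  by_contra h
  push_neg at h
  have := hmin _ h
  omega

theorem PW.isRight {f : ℝ → ℝ} {N : ℕ} (pw : PW f N) {i : ℤ} {z : ℝ}
    (h1 : pw.x (i - 1) ≤ z) (h2 : z < pw.x i) : Trop.IsRightPiece f z (pw.p i) := by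
  refine ⟨pw.x i - z, by linarith, fun y hy => ?_⟩
  exact pw.heval i y ⟨le_trans h1 hy.1, by have := hy.2; linarith⟩

theorem PW.isLeft {f : ℝ → ℝ} {N : ℕ} (pw : PW f N) {i : ℤ} {z : ℝ}
    (h1 : pw.x (i - 1) < z) (h2 : z ≤ pw.x i) : Trop.IsLeftPiece f z (pw.p i) := by
  refine ⟨z - pw.x (i - 1), by linarith, fun y hy => ?_⟩
  exact pw.heval i y ⟨by have := hy.1; linarith, le_trans hy.2 h2⟩

theorem PW.isRightPiece_rightPoly {f : ℝ → ℝ} {N : ℕ} (pw : PW f N) (z : ℝ) :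
    Trop.IsRightPiece f z (Trop.rightPoly f z) := by
  obtain ⟨i, h1, h2⟩ := pw.locR z
  rw [rightPoly_eq (pw.isRight h1 h2)]
  exact pw.isRight h1 h2

theorem PW.isLeftPiece_leftPoly {f : ℝ → ℝ} {N : ℕ} (pw : PW f N) (z : ℝ) :
    Trop.IsLeftPiece f z (Trop.leftPoly f z) := by
  obtain ⟨i, h1, h2⟩ := pw.locL z
  rw [leftPoly_eq (pw.isLeft h1 h2)]
  exact pw.isLeft h1 h2

theorem PW.eval_rightPoly {f : ℝ → ℝ} {N : ℕ} (pw : PW f N) (z : ℝ) :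
    f z = (Trop.rightPoly f z).eval z := by
  obtain ⟨ε, hε, hp⟩ := pw.isRightPiece_rightPoly z
  exact hp z ⟨le_refl z, by linarith⟩

theorem PW.eval_leftPoly {f : ℝ → ℝ} {N : ℕ} (pw : PW f N) (z : ℝ) :
    f z = (Trop.leftPoly f z).eval z := by
  obtain ⟨ε, hε, hp⟩ := pw.isLeftPiece_leftPoly z
  exact hp z ⟨by linarith, le_refl z⟩

theorem PW.deg_rightPoly {f : ℝ → ℝ} {N : ℕ} (pw : PW f N) (z : ℝ) :
    (Trop.rightPoly f z).natDegree ≤ N := by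
  obtain ⟨i, h1, h2⟩ := pw.locR z
  rw [rightPoly_eq (pw.isRight h1 h2)]
  exact pw.hdeg i

theorem PW.deg_leftPoly {f : ℝ → ℝ} {N : ℕ} (pw : PW f N) (z : ℝ) :
    (Trop.leftPoly f z).natDegree ≤ N := by
  obtain ⟨i, h1, h2⟩ := pw.locL z
  rw [leftPoly_eq (pw.isLeft h1 h2)]
  exact pw.hdeg i

theorem PW.eq_of_notMem {f : ℝ → ℝ} {N : ℕ} (pw : PW f N) {z : ℝ}
    (hz : z ∉ Set.range pw.x) : Trop.rightPoly f z = Trop.leftPoly f z := by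
  obtain ⟨i, h1, h2⟩ := pw.locR z
  have h1' : pw.x (i - 1) < z := h1.lt_of_ne (fun h => hz ⟨i - 1, h⟩)
  rw [rightPoly_eq (pw.isRight h1 h2), leftPoly_eq (pw.isLeft h1' h2.le)]

theorem PW.finBk {f : ℝ → ℝ} {N : ℕ} (pw : PW f N) (a b : ℝ) :
    (Set.range pw.x ∩ Set.Icc a b).Finite := by
  obtain ⟨hi, hhi⟩ := Filter.eventually_atTop.1 (pw.htop.eventually_gt_atTop b)
  obtain ⟨lo, hlo⟩ := Filter.eventually_atBot.1 (pw.hbot.eventually_lt_atBot a)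
  refine ((Set.finite_Icc lo hi).image pw.x).subset ?_
  rintro z ⟨⟨i, rfl⟩, hz⟩
  refine ⟨i, ⟨?_, ?_⟩, rfl⟩
  · by_contra h
    push_neg at h
    exact absurd hz.1 (not_le.2 (hlo i h.le))
  · by_contra h
    push_neg at h
    exact absurd hz.2 (not_le.2 (hhi i h.le))

theorem PW.finSP {f : ℝ → ℝ} {N : ℕ} (pw : PW f N) (y : ℝ) :
    {z : ℝ | z ∈ Set.range pw.x ∧ 0 < z ∧ z ≤ y}.Finite :=
  (pw.finBk 0 y).subset (fun z hz => ⟨hz.1, hz.2.1.le, hz.2.2⟩)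

theorem PW.finSM {f : ℝ → ℝ} {N : ℕ} (pw : PW f N) (y : ℝ) :
    {z : ℝ | z ∈ Set.range pw.x ∧ y ≤ z ∧ z < 0}.Finite :=
  (pw.finBk y 0).subset (fun z hz => ⟨hz.1, hz.2.1, hz.2.2.le⟩)

def PW.SP {f : ℝ → ℝ} {N : ℕ} (pw : PW f N) (y : ℝ) : Finset ℝ := (pw.finSP y).toFinset

def PW.SM {f : ℝ → ℝ} {N : ℕ} (pw : PW f N) (y : ℝ) : Finset ℝ := (pw.finSM y).toFinset

theorem PW.mem_SP {f : ℝ → ℝ} {N : ℕ} (pw : PW f N) {y z : ℝ} :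
    z ∈ pw.SP y ↔ z ∈ Set.range pw.x ∧ 0 < z ∧ z ≤ y := Set.Finite.mem_toFinset _

theorem PW.mem_SM {f : ℝ → ℝ} {N : ℕ} (pw : PW f N) {y z : ℝ} :
    z ∈ pw.SM y ↔ z ∈ Set.range pw.x ∧ y ≤ z ∧ z < 0 := Set.Finite.mem_toFinset _

end S13

end
noncomputable section
namespace S13
open Trop Polynomial Filter

theorem PW.right_decomp_aux {f : ℝ → ℝ} {N : ℕ} (pw : PW f N) :
    ∀ k : ℕ, ∀ y : ℝ, 0 ≤ y → (pw.SP y).card = k →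
      Trop.rightPoly f y = Trop.rightPoly f 0
        + ∑ z ∈ pw.SP y, (Trop.rightPoly f z - Trop.leftPoly f z) := by
  intro k
  induction k with
  | zero =>
    intro y hy hcard
    have hemp : pw.SP y = ∅ := Finset.card_eq_zero.1 hcard
    obtain ⟨i, h1, h2⟩ := pw.locR y
    have h0 : pw.x (i - 1) ≤ 0 := by
      by_contra h
      push_neg at h
      have : pw.x (i - 1) ∈ pw.SP y := pw.mem_SP.2 ⟨⟨_, rfl⟩, h, h1⟩
      simp [hemp] at this
    rw [hemp, Finset.sum_empty, add_zero, rightPoly_eq (pw.isRight h1 h2),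
        rightPoly_eq (pw.isRight h0 (lt_of_le_of_lt hy h2))]
  | succ k ih =>
    intro y hy hcard
    have hne : (pw.SP y).Nonempty := Finset.card_pos.1 (by omega)
    set zs := (pw.SP y).max' hne with hzdef
    have hzmem : zs ∈ pw.SP y := (pw.SP y).max'_mem hne
    obtain ⟨⟨m, hm⟩, hz0, hzy⟩ := pw.mem_SP.1 hzmem
    -- y < x (m+1)
    have hxm1 : zs < pw.x (m + 1) := hm ▸ pw.mono (by omega)
    have hy1 : y < pw.x (m + 1) := by
      by_contra h
      push_neg at h
      have hmem : pw.x (m + 1) ∈ pw.SP y := pw.mem_SP.2 ⟨⟨_, rfl⟩, lt_trans hz0 hxm1, h⟩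
      exact absurd (Finset.le_max' _ _ hmem) (not_le.2 hxm1)
    have hidx : pw.x (m + 1 - 1) = pw.x m := by norm_num
    have hRy : Trop.rightPoly f y = pw.p (m + 1) :=
      rightPoly_eq (pw.isRight (i := m + 1) (by rw [hidx, hm]; exact hzy) hy1)
    have hRz : Trop.rightPoly f zs = pw.p (m + 1) :=
      rightPoly_eq (pw.isRight (i := m + 1) (by rw [hidx, hm]) hxm1)
    have hxm0 : pw.x (m - 1) < zs := hm ▸ pw.mono (by omega)
    have hLz : Trop.leftPoly f zs = pw.p m :=
      leftPoly_eq (pw.isLeft hxm0 (le_of_eq hm.symm))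
    set y' := max (pw.x (m - 1)) 0 with hy'def
    have hy'0 : 0 ≤ y' := le_max_right _ _
    have hy'z : y' < zs := max_lt hxm0 hz0
    have hRy' : Trop.rightPoly f y' = pw.p m :=
      rightPoly_eq (pw.isRight (le_max_left _ _) (hm ▸ hy'z))
    have hSP' : pw.SP y' = (pw.SP y).erase zs := by
      ext w
      constructor
      · intro hw
        obtain ⟨hwr, hw0, hwy⟩ := pw.mem_SP.1 hw
        refine Finset.mem_erase.2 ⟨by intro h; rw [h] at hwy; linarith, ?_⟩
        exact pw.mem_SP.2 ⟨hwr, hw0, by linarith⟩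
      · intro hw
        obtain ⟨hne', hw'⟩ := Finset.mem_erase.1 hw
        obtain ⟨⟨i, hi⟩, hw0, hwy⟩ := pw.mem_SP.1 hw'
        have hle : w ≤ zs := Finset.le_max' _ _ hw'
        have hlt : w < zs := lt_of_le_of_ne hle hne'
        have him : i < m := by
          rw [← hi, ← hm] at hlt
          exact pw.mono.lt_iff_lt.1 hlt
        have : w ≤ pw.x (m - 1) := by
          rw [← hi]
          exact pw.mono.le_iff_le.2 (by omega)
        exact pw.mem_SP.2 ⟨⟨i, hi⟩, hw0, le_trans this (le_max_left _ _)⟩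
    have hcard' : (pw.SP y').card = k := by
      rw [hSP', Finset.card_erase_of_mem hzmem, hcard]; omega
    have hih := ih y' hy'0 hcard'
    rw [hSP'] at hih
    calc Trop.rightPoly f y = pw.p (m + 1) := hRy
      _ = pw.p m + (Trop.rightPoly f zs - Trop.leftPoly f zs) := by rw [hRz, hLz]; ring
      _ = Trop.rightPoly f 0 + (∑ z ∈ (pw.SP y).erase zs, (Trop.rightPoly f z - Trop.leftPoly f z)
            + (Trop.rightPoly f zs - Trop.leftPoly f zs)) := by rw [← hRy', hih]; ring
      _ = _ := by rw [Finset.sum_erase_add _ _ hzmem]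

theorem PW.left_decomp_aux {f : ℝ → ℝ} {N : ℕ} (pw : PW f N) :
    ∀ k : ℕ, ∀ y : ℝ, y ≤ 0 → (pw.SM y).card = k →
      Trop.leftPoly f y = Trop.leftPoly f 0
        + ∑ z ∈ pw.SM y, (Trop.leftPoly f z - Trop.rightPoly f z) := by
  intro k
  induction k with
  | zero =>
    intro y hy hcard
    have hemp : pw.SM y = ∅ := Finset.card_eq_zero.1 hcard
    obtain ⟨i, h1, h2⟩ := pw.locL y
    have h0 : 0 ≤ pw.x i := by
      by_contra h
      push_neg at h
      have : pw.x i ∈ pw.SM y := pw.mem_SM.2 ⟨⟨_, rfl⟩, h2, h⟩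
      simp [hemp] at this
    rw [hemp, Finset.sum_empty, add_zero, leftPoly_eq (pw.isLeft h1 h2),
        leftPoly_eq (pw.isLeft (lt_of_lt_of_le h1 hy) h0)]
  | succ k ih =>
    intro y hy hcard
    have hne : (pw.SM y).Nonempty := Finset.card_pos.1 (by omega)
    set zs := (pw.SM y).min' hne with hzdef
    have hzmem : zs ∈ pw.SM y := (pw.SM y).min'_mem hne
    obtain ⟨⟨m, hm⟩, hyz, hz0⟩ := pw.mem_SM.1 hzmem
    have hxm0 : pw.x (m - 1) < zs := hm ▸ pw.mono (by omega)
    have hy0 : pw.x (m - 1) < y := by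
      by_contra h
      push_neg at h
      have hmem : pw.x (m - 1) ∈ pw.SM y := pw.mem_SM.2 ⟨⟨_, rfl⟩, h, lt_trans hxm0 hz0⟩
      exact absurd (Finset.min'_le _ _ hmem) (not_le.2 hxm0)
    have hLy : Trop.leftPoly f y = pw.p m :=
      leftPoly_eq (pw.isLeft hy0 (hm ▸ hyz))
    have hLz : Trop.leftPoly f zs = pw.p m :=
      leftPoly_eq (pw.isLeft hxm0 (le_of_eq hm.symm))
    have hidx : pw.x (m + 1 - 1) = pw.x m := by norm_num
    have hxm1 : zs < pw.x (m + 1) := hm ▸ pw.mono (by omega)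
    have hRz : Trop.rightPoly f zs = pw.p (m + 1) :=
      rightPoly_eq (pw.isRight (i := m + 1) (by rw [hidx, hm]) hxm1)
    set y' := min (pw.x (m + 1)) 0 with hy'def
    have hy'0 : y' ≤ 0 := min_le_right _ _
    have hy'z : zs < y' := lt_min hxm1 hz0
    have hLy' : Trop.leftPoly f y' = pw.p (m + 1) :=
      leftPoly_eq (pw.isLeft (i := m + 1) (by rw [hidx]; exact lt_of_le_of_lt (le_of_eq hm) hy'z) (min_le_left _ _))
    have hSM' : pw.SM y' = (pw.SM y).erase zs := by
      ext w
      constructor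
      · intro hw
        obtain ⟨hwr, hwy, hw0⟩ := pw.mem_SM.1 hw
        refine Finset.mem_erase.2 ⟨by intro h; rw [h] at hwy; linarith, ?_⟩
        exact pw.mem_SM.2 ⟨hwr, by linarith, hw0⟩
      · intro hw
        obtain ⟨hne', hw'⟩ := Finset.mem_erase.1 hw
        obtain ⟨⟨i, hi⟩, hwy, hw0⟩ := pw.mem_SM.1 hw'
        have hle : zs ≤ w := Finset.min'_le _ _ hw'
        have hlt : zs < w := lt_of_le_of_ne hle (Ne.symm hne')
        have him : m < i := by
          rw [← hi, ← hm] at hlt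
          exact pw.mono.lt_iff_lt.1 hlt
        have : pw.x (m + 1) ≤ w := by
          rw [← hi]
          exact pw.mono.le_iff_le.2 (by omega)
        exact pw.mem_SM.2 ⟨⟨i, hi⟩, le_trans (min_le_left _ _) this, hw0⟩
    have hcard' : (pw.SM y').card = k := by
      rw [hSM', Finset.card_erase_of_mem hzmem, hcard]; omega
    have hih := ih y' hy'0 hcard'
    rw [hSM'] at hih
    calc Trop.leftPoly f y = pw.p m := hLy
      _ = pw.p (m + 1) + (Trop.leftPoly f zs - Trop.rightPoly f zs) := by rw [hRz, hLz]; ring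
      _ = Trop.leftPoly f 0 + (∑ z ∈ (pw.SM y).erase zs, (Trop.leftPoly f z - Trop.rightPoly f z)
            + (Trop.leftPoly f zs - Trop.rightPoly f zs)) := by rw [← hLy', hih]; ring
      _ = _ := by rw [Finset.sum_erase_add _ _ hzmem]

theorem PW.right_decomp {f : ℝ → ℝ} {N : ℕ} (pw : PW f N) {y : ℝ} (hy : 0 ≤ y) :
    Trop.rightPoly f y = Trop.rightPoly f 0
      + ∑ z ∈ pw.SP y, (Trop.rightPoly f z - Trop.leftPoly f z) :=
  pw.right_decomp_aux _ y hy rfl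

theorem PW.left_decomp {f : ℝ → ℝ} {N : ℕ} (pw : PW f N) {y : ℝ} (hy : y ≤ 0) :
    Trop.leftPoly f y = Trop.leftPoly f 0
      + ∑ z ∈ pw.SM y, (Trop.leftPoly f z - Trop.rightPoly f z) :=
  pw.left_decomp_aux _ y hy rfl

end S13
end
noncomputable section
namespace S13
open Trop Polynomial Filter

theorem range_split (N : ℕ) (f : ℕ → ℝ) :
    ∑ i ∈ Finset.range (N + 1), f i = f 0 + ∑ i ∈ Finset.Icc 1 N, f i := by
  have h : Finset.range (N + 1) = insert 0 (Finset.Icc 1 N) := by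
    ext i
    simp [Nat.lt_succ_iff]
    omega
  rw [h, Finset.sum_insert (by simp)]

theorem taylor_expand {q : Polynomial ℝ} {N : ℕ} (h : q.natDegree ≤ N) (z w : ℝ) :
    q.eval w = q.eval z
      + ∑ j ∈ Finset.Icc 1 N, (Polynomial.hasseDeriv j q).eval z * (w - z) ^ j := by
  have h1 : q.eval w = (Polynomial.taylor z q).eval (w - z) := by
    rw [Polynomial.taylor_eval]
    congr 1
    ring
  have h2 : (Polynomial.taylor z q).natDegree < N + 1 := by
    rw [Polynomial.natDegree_taylor]
    omega
  rw [h1, Polynomial.eval_eq_sum_range' h2, range_split]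
  congr 1
  · simp [Polynomial.taylor_coeff_zero]
  · exact Finset.sum_congr rfl fun j _ => by rw [Polynomial.taylor_coeff]

theorem rderiv_eq_hasse (f : ℝ → ℝ) (j : ℕ) (z : ℝ) :
    Trop.rderiv f j z = (j.factorial : ℝ) * (Polynomial.hasseDeriv j (Trop.rightPoly f z)).eval z := by
  rw [Trop.rderiv, show (fun q : Polynomial ℝ => Polynomial.derivative q)^[j] (Trop.rightPoly f z)
      = Polynomial.derivative^[j] (Trop.rightPoly f z) from rfl,
    ← Polynomial.factorial_smul_hasseDeriv]
  simp [nsmul_eq_mul]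

theorem lderiv_eq_hasse (f : ℝ → ℝ) (j : ℕ) (z : ℝ) :
    Trop.lderiv f j z = (j.factorial : ℝ) * (Polynomial.hasseDeriv j (Trop.leftPoly f z)).eval z := by
  rw [Trop.lderiv, show (fun q : Polynomial ℝ => Polynomial.derivative q)^[j] (Trop.leftPoly f z)
      = Polynomial.derivative^[j] (Trop.leftPoly f z) from rfl,
    ← Polynomial.factorial_smul_hasseDeriv]
  simp [nsmul_eq_mul]

theorem omega_hasse (f : ℝ → ℝ) (j : ℕ) (z : ℝ) :
    Trop.omega f j z
      = Trop.sgnR z ^ (j + 1) * (Polynomial.hasseDeriv j (Trop.rightPoly f z)).eval z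
        - Trop.sgnL z ^ (j + 1) * (Polynomial.hasseDeriv j (Trop.leftPoly f z)).eval z := by
  have hfac : (0 : ℝ) < (j.factorial : ℝ) := by positivity
  rw [Trop.omega, rderiv_eq_hasse, lderiv_eq_hasse]
  field_simp

theorem sgnR_pos {z : ℝ} (h : 0 ≤ z) : Trop.sgnR z = 1 := by
  rw [Trop.sgnR, if_neg (not_lt.2 h)]

theorem sgnR_neg {z : ℝ} (h : z < 0) : Trop.sgnR z = -1 := by
  rw [Trop.sgnR, if_pos h]

theorem sgnL_pos {z : ℝ} (h : 0 < z) : Trop.sgnL z = 1 := by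
  rw [Trop.sgnL, if_pos h]

theorem sgnL_neg {z : ℝ} (h : z ≤ 0) : Trop.sgnL z = -1 := by
  rw [Trop.sgnL, if_neg (not_lt.2 h)]

/-- At a non-breakpoint away from 0, `omega` vanishes. -/
theorem PW.omega_eq_zero {f : ℝ → ℝ} {N : ℕ} (pw : PW f N) {z : ℝ} (j : ℕ)
    (hz : z ≠ 0) (hbk : z ∉ Set.range pw.x) : Trop.omega f j z = 0 := by
  have hs : Trop.sgnR z = Trop.sgnL z := by
    rcases lt_or_gt_of_ne hz with h | h
    · rw [sgnR_neg h, sgnL_neg h.le]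
    · rw [sgnR_pos h.le, sgnL_pos h]
  rw [omega_hasse, pw.eq_of_notMem hbk, hs, sub_self]

/-- Jensen-type summation identity at a positive point. -/
theorem PW.sum_omega_pos {f : ℝ → ℝ} {N : ℕ} (pw : PW f N) {z r : ℝ} (hz : 0 < z) :
    ∑ j ∈ Finset.Icc 1 N, Trop.omega f j z * (r - |z|) ^ j
      = (Trop.rightPoly f z).eval r - (Trop.leftPoly f z).eval r := by
  set q := Trop.rightPoly f z - Trop.leftPoly f z with hq
  have hdeg : q.natDegree ≤ N :=
    le_trans (Polynomial.natDegree_sub_le _ _) (max_le (pw.deg_rightPoly z) (pw.deg_leftPoly z))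
  have hqz : q.eval z = 0 := by
    rw [hq, Polynomial.eval_sub, ← pw.eval_rightPoly z, ← pw.eval_leftPoly z, sub_self]
  have htay := taylor_expand hdeg z r
  calc ∑ j ∈ Finset.Icc 1 N, Trop.omega f j z * (r - |z|) ^ j
      = ∑ j ∈ Finset.Icc 1 N, (Polynomial.hasseDeriv j q).eval z * (r - z) ^ j := by
        refine Finset.sum_congr rfl fun j _ => ?_
        rw [omega_hasse, sgnR_pos hz.le, sgnL_pos hz, abs_of_pos hz, hq, map_sub,
          Polynomial.eval_sub, one_pow]
        ring
    _ = q.eval r := by rw [htay, hqz, zero_add]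
    _ = _ := by rw [hq, Polynomial.eval_sub]

/-- Jensen-type summation identity at a negative point. -/
theorem PW.sum_omega_neg {f : ℝ → ℝ} {N : ℕ} (pw : PW f N) {z r : ℝ} (hz : z < 0) :
    ∑ j ∈ Finset.Icc 1 N, Trop.omega f j z * (r - |z|) ^ j
      = (Trop.leftPoly f z).eval (-r) - (Trop.rightPoly f z).eval (-r) := by
  set q := Trop.rightPoly f z - Trop.leftPoly f z with hq
  have hdeg : q.natDegree ≤ N :=
    le_trans (Polynomial.natDegree_sub_le _ _) (max_le (pw.deg_rightPoly z) (pw.deg_leftPoly z))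
  have hqz : q.eval z = 0 := by
    rw [hq, Polynomial.eval_sub, ← pw.eval_rightPoly z, ← pw.eval_leftPoly z, sub_self]
  have htay := taylor_expand hdeg z (-r)
  calc ∑ j ∈ Finset.Icc 1 N, Trop.omega f j z * (r - |z|) ^ j
      = ∑ j ∈ Finset.Icc 1 N, -((Polynomial.hasseDeriv j q).eval z * (-r - z) ^ j) := by
        refine Finset.sum_congr rfl fun j _ => ?_
        have hpow : (-r - z) ^ j = (-1 : ℝ) ^ j * (r + z) ^ j := by
          rw [show (-r - z : ℝ) = (-1) * (r + z) by ring, mul_pow]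
        rw [omega_hasse, sgnR_neg hz, sgnL_neg hz.le, abs_of_neg hz, hq, map_sub,
          Polynomial.eval_sub, hpow, pow_succ]
        ring
    _ = -(q.eval (-r) - q.eval z) := by
        rw [htay, hqz, zero_add, sub_zero]
        rw [Finset.sum_neg_distrib]
    _ = _ := by rw [hqz, hq, Polynomial.eval_sub]; ring

/-- Jensen-type summation identity at 0. -/
theorem PW.sum_omega_zero {f : ℝ → ℝ} {N : ℕ} (pw : PW f N) (r : ℝ) :
    ∑ j ∈ Finset.Icc 1 N, Trop.omega f j 0 * (r - |(0 : ℝ)|) ^ j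
      = ((Trop.rightPoly f 0).eval r - (Trop.rightPoly f 0).eval 0)
        + ((Trop.leftPoly f 0).eval (-r) - (Trop.leftPoly f 0).eval 0) := by
  have hR := taylor_expand (pw.deg_rightPoly 0) 0 r
  have hL := taylor_expand (pw.deg_leftPoly 0) 0 (-r)
  have key : ∑ j ∈ Finset.Icc 1 N, Trop.omega f j 0 * (r - |(0 : ℝ)|) ^ j
      = ∑ j ∈ Finset.Icc 1 N, ((Polynomial.hasseDeriv j (Trop.rightPoly f 0)).eval 0 * (r - 0) ^ j
          + (Polynomial.hasseDeriv j (Trop.leftPoly f 0)).eval 0 * (-r - 0) ^ j) := by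
    refine Finset.sum_congr rfl fun j _ => ?_
    have hpow : (-r - 0) ^ j = (-1 : ℝ) ^ j * (r - 0) ^ j := by
      rw [show (-r - 0 : ℝ) = (-1) * (r - 0) by ring, mul_pow]
    rw [omega_hasse, sgnR_pos (le_refl 0), sgnL_neg (le_refl 0), abs_zero, hpow, one_pow, pow_succ]
    ring
  rw [key, Finset.sum_add_distrib]
  rw [hR, hL]
  ring

/-- The tropical Jensen formula. -/
theorem PW.jensen {f : ℝ → ℝ} {N : ℕ} (pw : PW f N) {r : ℝ} (hr : 0 < r) :
    f r + f (-r) - 2 * f 0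
      = ∑ z ∈ insert (0 : ℝ) (pw.SP r ∪ pw.SM (-r)),
          ∑ j ∈ Finset.Icc 1 N, Trop.omega f j z * (r - |z|) ^ j := by
  have h0notin : (0 : ℝ) ∉ pw.SP r ∪ pw.SM (-r) := by
    simp [pw.mem_SP, pw.mem_SM]
  have hdisj : Disjoint (pw.SP r) (pw.SM (-r)) := by
    rw [Finset.disjoint_left]
    intro z hz hz'
    have h1 := (pw.mem_SP.1 hz).2.1
    have h2 := (pw.mem_SM.1 hz').2.2
    linarith
  rw [Finset.sum_insert h0notin, Finset.sum_union hdisj]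
  have hfr : f r = (Trop.rightPoly f 0).eval r
      + ∑ z ∈ pw.SP r, ((Trop.rightPoly f z).eval r - (Trop.leftPoly f z).eval r) := by
    rw [pw.eval_rightPoly r, pw.right_decomp hr.le, Polynomial.eval_add,
      Polynomial.eval_finset_sum]
    simp [Polynomial.eval_sub]
  have hfmr : f (-r) = (Trop.leftPoly f 0).eval (-r)
      + ∑ z ∈ pw.SM (-r), ((Trop.leftPoly f z).eval (-r) - (Trop.rightPoly f z).eval (-r)) := by
    rw [pw.eval_leftPoly (-r), pw.left_decomp (by linarith), Polynomial.eval_add,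
      Polynomial.eval_finset_sum]
    simp [Polynomial.eval_sub]
  have hf0R : f 0 = (Trop.rightPoly f 0).eval 0 := pw.eval_rightPoly 0
  have hf0L : f 0 = (Trop.leftPoly f 0).eval 0 := pw.eval_leftPoly 0
  have hP : ∑ z ∈ pw.SP r, ∑ j ∈ Finset.Icc 1 N, Trop.omega f j z * (r - |z|) ^ j
      = ∑ z ∈ pw.SP r, ((Trop.rightPoly f z).eval r - (Trop.leftPoly f z).eval r) :=
    Finset.sum_congr rfl fun z hz => pw.sum_omega_pos (pw.mem_SP.1 hz).2.1
  have hM : ∑ z ∈ pw.SM (-r), ∑ j ∈ Finset.Icc 1 N, Trop.omega f j z * (r - |z|) ^ j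
      = ∑ z ∈ pw.SM (-r), ((Trop.leftPoly f z).eval (-r) - (Trop.rightPoly f z).eval (-r)) :=
    Finset.sum_congr rfl fun z hz => pw.sum_omega_neg (pw.mem_SM.1 hz).2.2
  rw [hP, hM, pw.sum_omega_zero r]
  rw [hfr, hfmr, show (2 : ℝ) * f 0
    = (Trop.rightPoly f 0).eval 0 + (Trop.leftPoly f 0).eval 0 by rw [← hf0R, ← hf0L]; ring]
  ring

end S13
end
noncomputable section
namespace S13
open Trop Polynomial Filter

theorem iter_der_sub (j : ℕ) (p q : Polynomial ℝ) :
    (fun q : Polynomial ℝ => Polynomial.derivative q)^[j] (p - q)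
      = (fun q : Polynomial ℝ => Polynomial.derivative q)^[j] p
        - (fun q : Polynomial ℝ => Polynomial.derivative q)^[j] q := by
  induction j with
  | zero => simp
  | succ k ih => simp [Function.iterate_succ_apply', ih]

theorem omega_sub {g₀ g₁ : ℝ → ℝ} {N₀ N₁ : ℕ} (pw₀ : PW g₀ N₀) (pw₁ : PW g₁ N₁) (j : ℕ) (z : ℝ) :
    Trop.omega (fun x => g₁ x - g₀ x) j z = Trop.omega g₁ j z - Trop.omega g₀ j z := by
  have hR : Trop.rightPoly (fun x => g₁ x - g₀ x) z = Trop.rightPoly g₁ z - Trop.rightPoly g₀ z :=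
    rightPoly_eq (isRightPiece_sub (pw₁.isRightPiece_rightPoly z) (pw₀.isRightPiece_rightPoly z))
  have hL : Trop.leftPoly (fun x => g₁ x - g₀ x) z = Trop.leftPoly g₁ z - Trop.leftPoly g₀ z :=
    leftPoly_eq (isLeftPiece_sub (pw₁.isLeftPiece_leftPoly z) (pw₀.isLeftPiece_leftPoly z))
  have hrd : Trop.rderiv (fun x => g₁ x - g₀ x) j z = Trop.rderiv g₁ j z - Trop.rderiv g₀ j z := by
    rw [Trop.rderiv, Trop.rderiv, Trop.rderiv, hR, iter_der_sub, Polynomial.eval_sub]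
  have hld : Trop.lderiv (fun x => g₁ x - g₀ x) j z = Trop.lderiv g₁ j z - Trop.lderiv g₀ j z := by
    rw [Trop.lderiv, Trop.lderiv, Trop.lderiv, hL, iter_der_sub, Polynomial.eval_sub]
  rw [Trop.omega, Trop.omega, Trop.omega, hrd, hld]
  ring

theorem PW.rderiv_zero {f : ℝ → ℝ} {N : ℕ} (pw : PW f N) {j : ℕ} (hj : N < j) (z : ℝ) :
    Trop.rderiv f j z = 0 := by
  rw [Trop.rderiv, show (fun q : Polynomial ℝ => Polynomial.derivative q)^[j] (Trop.rightPoly f z)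
      = Polynomial.derivative^[j] (Trop.rightPoly f z) from rfl,
    Polynomial.iterate_derivative_eq_zero (lt_of_le_of_lt (pw.deg_rightPoly z) hj)]
  simp

theorem PW.lderiv_zero {f : ℝ → ℝ} {N : ℕ} (pw : PW f N) {j : ℕ} (hj : N < j) (z : ℝ) :
    Trop.lderiv f j z = 0 := by
  rw [Trop.lderiv, show (fun q : Polynomial ℝ => Polynomial.derivative q)^[j] (Trop.leftPoly f z)
      = Polynomial.derivative^[j] (Trop.leftPoly f z) from rfl,
    Polynomial.iterate_derivative_eq_zero (lt_of_le_of_lt (pw.deg_leftPoly z) hj)]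
  simp

theorem PW.omega_zero_of_deg {f : ℝ → ℝ} {N : ℕ} (pw : PW f N) {j : ℕ} (hj : N < j) (z : ℝ) :
    Trop.omega f j z = 0 := by
  rw [Trop.omega, pw.rderiv_zero hj, pw.lderiv_zero hj]
  simp

theorem tsum_subtype_eq_sum {P : ℝ → Prop} (h : {z : ℝ | P z}.Finite) (F : ℝ → ℝ) :
    ∑' z : {z : ℝ // P z}, F z.1 = ∑ z ∈ h.toFinset, F z := by
  have key : ∑' z : ↥{z : ℝ | P z}, F z.1 = ∑ z ∈ h.toFinset, F z := by
    haveI := h.fintype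
    rw [tsum_fintype]
    exact (Finset.sum_subtype h.toFinset (by simp) F).symm
  exact key

end S13
end
/-- if `g = g₁ − g₀` is `n`-th tropical meromorphic with `g₀, g₁` tropical
entire and without common `j`-th roots, and `f = [g₀ : g₁]`, then
`T_f(r) = T(r, g) − g⁺(0)` for every `r > 0`. -/
theorem statement13 (n : ℕ) (hn : 1 ≤ n) (g₀ g₁ : ℝ → ℝ)
    (h₀ : ∃ k : ℕ, Trop.IsTropicalEntire k g₀)
    (h₁ : ∃ k : ℕ, Trop.IsTropicalEntire k g₁)
    (hmero : Trop.IsTropicalMeromorphic n (fun x => g₁ x - g₀ x))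
    (hnocommon : ∀ j : ℕ, 1 ≤ j → ∀ x : ℝ,
      ¬ (0 < Trop.omega g₀ j x ∧ 0 < Trop.omega g₁ j x)) :
    ∀ r : ℝ, 0 < r →
      (max (g₀ r) (g₁ r) + max (g₀ (-r)) (g₁ (-r))) / 2 - max (g₀ 0) (g₁ 0)
        = Trop.Tchar n r (fun x => g₁ x - g₀ x) - max (g₁ 0 - g₀ 0) 0 := by
  intro r hr
  obtain ⟨k₀, hp₀, hnp₀⟩ := h₀
  obtain ⟨k₁, hp₁, hnp₁⟩ := h₁
  obtain ⟨pw₀k⟩ := S13.pw_of hp₀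
  obtain ⟨pw₁k⟩ := S13.pw_of hp₁
  obtain ⟨pwg⟩ := S13.pw_of hmero.1
  set g : ℝ → ℝ := fun x => g₁ x - g₀ x with hgdef
  set N : ℕ := max n (max k₀ k₁) with hN
  have pw₀ : S13.PW g₀ N := pw₀k.weaken (le_trans (le_max_left k₀ k₁) (le_max_right n _))
  have hnN : n ≤ N := le_max_left _ _
  have homega_sub : ∀ (j : ℕ) (z : ℝ),
      Trop.omega g j z = Trop.omega g₁ j z - Trop.omega g₀ j z := by
    intro j z
    rw [hgdef]
    exact S13.omega_sub pw₀k pw₁k j z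
  have h1zero : ∀ (j : ℕ), 1 ≤ j → ∀ (z : ℝ),
      0 < Trop.omega g₀ j z → Trop.omega g₁ j z = 0 := by
    intro j hj z h
    have h2 := hnp₁ j hj z
    by_contra hne
    exact hnocommon j hj z ⟨h, lt_of_le_of_ne h2 (Ne.symm hne)⟩
  have hhigh : ∀ (j : ℕ), n < j → ∀ (z : ℝ), Trop.omega g₀ j z = 0 := by
    intro j hjn z
    have hgz : Trop.omega g j z = 0 := pwg.omega_zero_of_deg hjn z
    have h01 : Trop.omega g₁ j z = Trop.omega g₀ j z := by
      have := homega_sub j z; linarith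
    have h0n := hnp₀ j (by omega) z
    by_contra hne
    exact hnocommon j (by omega) z ⟨lt_of_le_of_ne h0n (Ne.symm hne),
      h01 ▸ lt_of_le_of_ne h0n (Ne.symm hne)⟩
  set CC : Finset ℝ := insert (0 : ℝ) (pw₀.SP r ∪ pw₀.SM (-r)) with hCC
  have hCCmem : ∀ z ∈ CC, -r ≤ z ∧ z ≤ r := by
    intro z hz
    rcases Finset.mem_insert.1 hz with h | h
    · rw [h]; constructor <;> linarith
    · rcases Finset.mem_union.1 h with h | h
      · obtain ⟨-, h1, h2⟩ := pw₀.mem_SP.1 h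
        constructor <;> linarith
      · obtain ⟨-, h1, h2⟩ := pw₀.mem_SM.1 h
        constructor <;> linarith
  have hCCmem' : ∀ z : ℝ, -r < z → z < r → (z = 0 ∨ z ∈ Set.range pw₀.x) → z ∈ CC := by
    intro z h1 h2 h3
    rcases h3 with rfl | h3
    · exact Finset.mem_insert_self _ _
    · rcases lt_trichotomy z 0 with h | h | h
      · exact Finset.mem_insert_of_mem (Finset.mem_union_right _ (pw₀.mem_SM.2 ⟨h3, h1.le, h⟩))
      · exact h ▸ Finset.mem_insert_self _ _
      · exact Finset.mem_insert_of_mem (Finset.mem_union_left _ (pw₀.mem_SP.2 ⟨h3, h, h2.le⟩))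
  have hNpole : ∀ j ∈ Finset.Icc 1 n, Trop.Npole j r g
      = (1/2 : ℝ) * ∑ z ∈ CC, Trop.omega g₀ j z * (r - |z|) ^ j := by
    intro j hj
    obtain ⟨hj1, hjn⟩ := Finset.mem_Icc.1 hj
    have hAsub : {z : ℝ | z ∈ Set.Ioo (-r) r ∧ Trop.omega g j z < 0} ⊆ ↑CC := by
      intro z hz
      obtain ⟨hzI, hzo⟩ := hz
      have h0pos : 0 < Trop.omega g₀ j z := by
        have ha := homega_sub j z
        have hb := hnp₁ j hj1 z
        linarith
      refine hCCmem' z hzI.1 hzI.2 ?_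
      by_cases hz0 : z = 0
      · exact Or.inl hz0
      · refine Or.inr ?_
        by_contra hbk
        exact absurd (pw₀.omega_eq_zero j hz0 hbk) (ne_of_gt h0pos)
    have hAfin : {z : ℝ | z ∈ Set.Ioo (-r) r ∧ Trop.omega g j z < 0}.Finite :=
      CC.finite_toSet.subset hAsub
    have h1 : Trop.Npole j r g
        = (1/2 : ℝ) * ∑ z ∈ hAfin.toFinset, |Trop.omega g j z| * (r - |z|) ^ j := by
      rw [Trop.Npole]
      congr 1
      exact S13.tsum_subtype_eq_sum hAfin (fun z => |Trop.omega g j z| * (r - |z|) ^ j)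
    have h2 : ∀ z ∈ hAfin.toFinset, |Trop.omega g j z| * (r - |z|) ^ j
        = Trop.omega g₀ j z * (r - |z|) ^ j := by
      intro z hz
      obtain ⟨-, hzo⟩ := hAfin.mem_toFinset.1 hz
      have h0pos : 0 < Trop.omega g₀ j z := by
        have ha := homega_sub j z
        have hb := hnp₁ j hj1 z
        linarith
      have h1z := h1zero j hj1 z h0pos
      have hneg : Trop.omega g j z = -Trop.omega g₀ j z := by
        have := homega_sub j z; linarith
      rw [hneg, abs_of_neg (by linarith), neg_neg]
    rw [h1, Finset.sum_congr rfl h2]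
    congr 1
    refine Finset.sum_subset (Set.Finite.toFinset_subset.2 hAsub) ?_
    intro z hzCC hznot
    obtain ⟨hza, hzb⟩ := hCCmem z hzCC
    have habs : |z| ≤ r := abs_le.2 ⟨hza, hzb⟩
    rcases eq_or_lt_of_le habs with heq | hlt
    · rw [show r - |z| = 0 by linarith, zero_pow (by omega : j ≠ 0), mul_zero]
    · have hIoo : z ∈ Set.Ioo (-r) r := by
        obtain ⟨h1', h2'⟩ := abs_lt.1 hlt
        exact ⟨h1', h2'⟩
      have h0le := hnp₀ j hj1 z
      rcases eq_or_lt_of_le h0le with heq0 | hpos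
      · rw [← heq0, zero_mul]
      · exfalso
        have h1z := h1zero j hj1 z hpos
        have hneg : Trop.omega g j z < 0 := by
          have := homega_sub j z; linarith
        exact hznot (hAfin.mem_toFinset.2 ⟨hIoo, hneg⟩)
  have hjensen := pw₀.jensen hr
  have hsum : ∑ j ∈ Finset.Icc 1 n, Trop.Npole j r g
      = (1/2 : ℝ) * (g₀ r + g₀ (-r) - 2 * g₀ 0) := by
    rw [Finset.sum_congr rfl hNpole, ← Finset.mul_sum]
    congr 1
    rw [show (∑ j ∈ Finset.Icc 1 n, ∑ z ∈ CC, Trop.omega g₀ j z * (r - |z|) ^ j)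
        = ∑ j ∈ Finset.Icc 1 N, ∑ z ∈ CC, Trop.omega g₀ j z * (r - |z|) ^ j from
      Finset.sum_subset (Finset.Icc_subset_Icc_right hnN) (fun j hjN hjn => Finset.sum_eq_zero
        (fun z _ => by
          have hlt : n < j := by
            simp only [Finset.mem_Icc] at hjN hjn
            omega
          rw [hhigh j hlt z, zero_mul]))]
    rw [Finset.sum_comm]
    exact hjensen.symm
  have hmax : ∀ s : ℝ, max (g₀ s) (g₁ s) = g₀ s + max (g₁ s - g₀ s) 0 := by
    intro s
    rcases le_total (g₀ s) (g₁ s) with h | h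
    · rw [max_eq_right h, max_eq_left (by linarith)]; ring
    · rw [max_eq_left h, max_eq_right (by linarith)]; ring
  have hTchar : Trop.Tchar n r g = (max (g r) 0 + max (g (-r)) 0) / 2
      + ∑ j ∈ Finset.Icc 1 n, Trop.Npole j r g := rfl
  have hgr : g r = g₁ r - g₀ r := rfl
  have hgmr : g (-r) = g₁ (-r) - g₀ (-r) := rfl
  rw [hmax r, hmax (-r), hmax 0, hTchar, hsum, hgr, hgmr]
  ring
end
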